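/- arXiv:2408.05817 — 6 statements merged into one kernel-verified Lean document; each statement's English description precedes it below -/
import Mathlib

section
/- For every horizon T ∈ ℕ, every r > 1 and every δ_F ∈ (0,1), the TVT-CuSum stopping time satisfies P_∞(τ_r ≤ T) ≤ δ_F. -/
open MeasureTheory ProbabilityTheory
open scoped ENNReal

noncomputable section

/-- `zeta r = ∑_{i=1}^∞ i^{-r}`. -/
def zeta (r : ℝ) : ℝ := ∑' n : ℕ, ((n : ℝ) + 1) ^ (-r)

/-- CuSum statistic `W_n = max_{1 ≤ k ≤ n} ∑_{i=k}^n a_i` (with `W_0 = 0`). -/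
def cusum (a : ℕ → ℝ) (n : ℕ) : ℝ :=
  ⨆ k : {k : ℕ // k ∈ Finset.Icc 1 n}, ∑ i ∈ Finset.Icc (k : ℕ) n, a i

/-- Time-varying threshold `β(n, δF, r) = log (ζ(r) n^r / δF)`. -/
def beta (r δF : ℝ) (n : ℕ) : ℝ := Real.log (zeta r * (n : ℝ) ^ r / δF)

/-- Log-likelihood ratio sequence `i ↦ log (f1(X_i)/f0(X_i))` along a trajectory `ω`. -/
def llr (f0 f1 : ℝ → ℝ) (ω : ℕ → ℝ) (i : ℕ) : ℝ := Real.log (f1 (ω i) / f0 (ω i))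

/-- TVT-CuSum stopping time `τ_r = inf {n ≥ 1 : W_n ≥ β(n, δF, r)}` (∞ if no such n). -/
def tau (f0 f1 : ℝ → ℝ) (r δF : ℝ) (ω : ℕ → ℝ) : ℕ∞ :=
  sInf {t : ℕ∞ | ∃ n : ℕ, t = (n : ℕ∞) ∧ 1 ≤ n ∧ beta r δF n ≤ cusum (llr f0 f1 ω) n}

namespace TVTAux

/-- σ-algebra on trajectories generated by the coordinates in `s`. -/
def coordSA (s : Set ℕ) : MeasurableSpace (ℕ → ℝ) :=
  ⨆ i ∈ s, MeasurableSpace.comap (fun ω : ℕ → ℝ => ω i) inferInstance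

lemma coordSA_le (s : Set ℕ) : coordSA s ≤ (inferInstance : MeasurableSpace (ℕ → ℝ)) :=
  iSup₂_le fun i _ => measurable_iff_comap_le.mp (measurable_pi_apply i)

lemma measurable_coord {s : Set ℕ} {i : ℕ} (hi : i ∈ s) :
    Measurable[coordSA s] (fun ω : ℕ → ℝ => ω i) :=
  (Measurable.of_comap_le le_rfl).mono
    (le_iSup₂ (f := fun i (_ : i ∈ s) =>
      MeasurableSpace.comap (fun ω : ℕ → ℝ => ω i) inferInstance) i hi) le_rfl

variable {P : Measure (ℕ → ℝ)}

lemma indep_coordSA [IsProbabilityMeasure P]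
    (hiid : iIndepFun (fun i (ω : ℕ → ℝ) => ω i) P)
    {s t : Set ℕ} (hst : Disjoint s t) :
    Indep (coordSA s) (coordSA t) P := by
  have h_le : ∀ i : ℕ, MeasurableSpace.comap (fun ω : ℕ → ℝ => ω i) inferInstance
      ≤ (inferInstance : MeasurableSpace (ℕ → ℝ)) :=
    fun i => measurable_iff_comap_le.mp (measurable_pi_apply i)
  have h := indep_biSup_compl h_le hiid.iIndep s
  refine indep_of_indep_of_le_right h (iSup₂_le fun i hi => ?_)
  exact le_iSup₂ (f := fun i (_ : i ∈ sᶜ) =>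
    MeasurableSpace.comap (fun ω : ℕ → ℝ => ω i) inferInstance) i (Set.disjoint_right.mp hst hi)

lemma lintegral_mul_coordSA [IsProbabilityMeasure P]
    (hiid : iIndepFun (fun i (ω : ℕ → ℝ) => ω i) P)
    {s t : Set ℕ} (hst : Disjoint s t) {F G : (ℕ → ℝ) → ℝ≥0∞}
    (hF : Measurable[coordSA s] F) (hG : Measurable[coordSA t] G) :
    ∫⁻ ω, F ω * G ω ∂P = (∫⁻ ω, F ω ∂P) * ∫⁻ ω, G ω ∂P :=
  lintegral_mul_eq_lintegral_mul_lintegral_of_independent_measurableSpace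
    (coordSA_le s) (coordSA_le t) (indep_coordSA hiid hst) hF hG

lemma lintegral_prod_coord [IsProbabilityMeasure P]
    (hiid : iIndepFun (fun i (ω : ℕ → ℝ) => ω i) P)
    {g0 : ℝ → ℝ≥0∞} (hg0 : Measurable g0)
    (hone : ∀ j : ℕ, ∫⁻ ω, g0 (ω j) ∂P = 1) (s : Finset ℕ) :
    ∫⁻ ω, ∏ i ∈ s, g0 (ω i) ∂P = 1 := by
  classical
  induction s using Finset.induction with
  | empty => simp
  | @insert j s hj ih =>
    have hdis : Disjoint ({j} : Set ℕ) (↑s : Set ℕ) := by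
      simpa [Set.disjoint_singleton_left] using hj
    have hF : Measurable[coordSA ({j} : Set ℕ)] (fun ω : ℕ → ℝ => g0 (ω j)) :=
      hg0.comp (measurable_coord (by simp))
    have hG : Measurable[coordSA (↑s : Set ℕ)] (fun ω : ℕ → ℝ => ∏ i ∈ s, g0 (ω i)) :=
      Finset.measurable_prod s fun i hi => hg0.comp (measurable_coord (by simpa using hi))
    calc ∫⁻ ω, ∏ i ∈ insert j s, g0 (ω i) ∂P
        = ∫⁻ ω, g0 (ω j) * ∏ i ∈ s, g0 (ω i) ∂P := by
          simp_rw [Finset.prod_insert hj]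
      _ = (∫⁻ ω, g0 (ω j) ∂P) * ∫⁻ ω, ∏ i ∈ s, g0 (ω i) ∂P :=
          lintegral_mul_coordSA hiid hdis hF hG
      _ = 1 := by rw [hone j, ih, mul_one]

end TVTAux

open TVTAux

lemma cusum_ge_iff {a : ℕ → ℝ} {n : ℕ} (hn : 1 ≤ n) {b : ℝ} :
    b ≤ cusum a n ↔ ∃ k ∈ Finset.Icc 1 n, b ≤ ∑ i ∈ Finset.Icc k n, a i := by
  haveI hne : Nonempty {k : ℕ // k ∈ Finset.Icc 1 n} :=
    ⟨⟨n, Finset.mem_Icc.mpr ⟨hn, le_rfl⟩⟩⟩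
  constructor
  · intro h
    have hex : ∃ k : {k : ℕ // k ∈ Finset.Icc 1 n}, (∑ i ∈ Finset.Icc (k : ℕ) n, a i)
        = ⨆ k : {k : ℕ // k ∈ Finset.Icc 1 n}, ∑ i ∈ Finset.Icc (k : ℕ) n, a i :=
      exists_eq_ciSup_of_finite
    obtain ⟨k, hk⟩ := hex
    exact ⟨(k : ℕ), k.2, by rw [hk]; exact h⟩
  · rintro ⟨k, hk, hb⟩
    haveI : Fintype {k : ℕ // k ∈ Finset.Icc 1 n} := FinsetCoe.fintype _
    refine hb.trans ?_
    exact le_ciSup (f := fun k : {k : ℕ // k ∈ Finset.Icc 1 n} => ∑ i ∈ Finset.Icc (k : ℕ) n, a i)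
      (Set.Finite.bddAbove (Set.finite_range _)) ⟨k, hk⟩

/-- The single-horizon Chernoff-type bound for the CuSum statistic:
`e^b · P(W_n ≥ b) ≤ 1`. -/
lemma cusum_exp_bound
    (f0 f1 : ℝ → ℝ)
    (hf0_pos : ∀ x, 0 < f0 x) (hf1_pos : ∀ x, 0 < f1 x)
    (hf0_meas : Measurable f0) (hf1_meas : Measurable f1)
    (hf1_int : ∫ x, f1 x = 1)
    (P : Measure (ℕ → ℝ)) [IsProbabilityMeasure P]
    (hiid : iIndepFun (fun i (ω : ℕ → ℝ) => ω i) P)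
    (hmarg : ∀ i, P.map (fun ω : ℕ → ℝ => ω i)
      = volume.withDensity (fun x => ENNReal.ofReal (f0 x)))
    (n : ℕ) (hn : 1 ≤ n) (b : ℝ) :
    ENNReal.ofReal (Real.exp b) * P {ω | b ≤ cusum (llr f0 f1 ω) n} ≤ 1 := by
  classical
  set g0 : ℝ → ℝ≥0∞ := fun x => ENNReal.ofReal (f1 x / f0 x) with hg0def
  have hg0 : Measurable g0 := ENNReal.measurable_ofReal.comp (hf1_meas.div hf0_meas)
  -- mean one property
  have hone : ∀ j : ℕ, ∫⁻ ω, g0 (ω j) ∂P = 1 := by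
    intro j
    have h1 : ∫⁻ ω, g0 (ω j) ∂P = ∫⁻ x, g0 x ∂(P.map (fun ω : ℕ → ℝ => ω j)) :=
      (lintegral_map hg0 (measurable_pi_apply j)).symm
    have hf0' : Measurable fun x : ℝ => ENNReal.ofReal (f0 x) := hf0_meas.ennreal_ofReal
    rw [h1, hmarg j, lintegral_withDensity_eq_lintegral_mul volume hf0' hg0]
    have h2 : ∀ x : ℝ, ((fun x => ENNReal.ofReal (f0 x)) * g0) x = ENNReal.ofReal (f1 x) := by
      intro x
      simp only [Pi.mul_apply, hg0def]
      rw [← ENNReal.ofReal_mul (le_of_lt (hf0_pos x)), mul_comm,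
        div_mul_cancel₀ _ (ne_of_gt (hf0_pos x))]
    have hint : Integrable f1 := by
      by_contra h
      rw [integral_undef h] at hf1_int
      norm_num at hf1_int
    calc ∫⁻ x, ((fun x => ENNReal.ofReal (f0 x)) * g0) x
        = ∫⁻ x, ENNReal.ofReal (f1 x) := by simp_rw [h2]
      _ = ENNReal.ofReal (∫ x, f1 x) :=
          (ofReal_integral_eq_lintegral_ofReal hint
            (ae_of_all _ fun x => (hf1_pos x).le)).symm
      _ = 1 := by rw [hf1_int]; simp
  -- partial sums
  set S : ℕ → (ℕ → ℝ) → ℝ := fun k ω => ∑ i ∈ Finset.Icc k n, llr f0 f1 ω i with hSdef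
  have hll : Measurable fun x : ℝ => Real.log (f1 x / f0 x) :=
    Real.measurable_log.comp (hf1_meas.div hf0_meas)
  have hS_co : ∀ k k' : ℕ, k ≤ k' →
      Measurable[coordSA (↑(Finset.Icc k n) : Set ℕ)] (S k') := by
    intro k k' hkk'
    refine Finset.measurable_sum _ fun i hi => hll.comp (measurable_coord ?_)
    simp only [Finset.coe_Icc, Set.mem_Icc]
    simp only [Finset.mem_Icc] at hi
    omega
  -- last exceedance events
  set B : ℕ → Set (ℕ → ℝ) :=
    fun k => {ω | b ≤ S k ω ∧ ∀ k' ∈ Finset.Ioc k n, S k' ω < b} with hBdef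
  have hB_co : ∀ k, MeasurableSet[coordSA (↑(Finset.Icc k n) : Set ℕ)] (B k) := by
    intro k
    have hrw : B k = {ω | b ≤ S k ω} ∩ ⋂ k' ∈ Finset.Ioc k n, {ω | S k' ω < b} := by
      ext ω
      simp [hBdef, Set.mem_iInter]
    rw [hrw]
    refine MeasurableSet.inter (measurableSet_le measurable_const (hS_co k k le_rfl)) ?_
    refine MeasurableSet.biInter (Finset.Ioc k n).countable_toSet fun k' hk' => ?_
    exact measurableSet_lt (hS_co k k' (Finset.mem_Ioc.mp hk').1.le) measurable_const
  have hBmeas : ∀ k, MeasurableSet (B k) := fun k => (coordSA_le _) _ (hB_co k)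
  -- covering
  have hcover : {ω | b ≤ cusum (llr f0 f1 ω) n} ⊆ ⋃ k ∈ Finset.Icc 1 n, B k := by
    intro ω hω
    rw [Set.mem_setOf_eq, cusum_ge_iff hn] at hω
    obtain ⟨k0, hk0, hbk0⟩ := hω
    set C : Finset ℕ := (Finset.Icc 1 n).filter (fun k => b ≤ S k ω) with hCdef
    have hCne : C.Nonempty := ⟨k0, Finset.mem_filter.mpr ⟨hk0, hbk0⟩⟩
    have hkmC : C.max' hCne ∈ C := C.max'_mem hCne
    have hkm_mem : C.max' hCne ∈ Finset.Icc 1 n := (Finset.mem_filter.mp hkmC).1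
    have hkm_ge : b ≤ S (C.max' hCne) ω := (Finset.mem_filter.mp hkmC).2
    refine Set.mem_biUnion hkm_mem ?_
    refine ⟨hkm_ge, fun k' hk' => ?_⟩
    by_contra hcon
    push_neg at hcon
    have hk'C : k' ∈ C := by
      refine Finset.mem_filter.mpr ⟨Finset.mem_Icc.mpr ?_, hcon⟩
      have h1 := Finset.mem_Ioc.mp hk'
      have h2 := Finset.mem_Icc.mp hkm_mem
      omega
    have h3 := C.le_max' k' hk'C
    have h4 := (Finset.mem_Ioc.mp hk').1
    omega
  -- disjointness
  have hdisj : (↑(Finset.Icc 1 n) : Set ℕ).PairwiseDisjoint B := by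
    have key : ∀ a c : ℕ, a < c → c ≤ n → Disjoint (B a) (B c) := by
      intro a c hac hcn
      rw [Set.disjoint_left]
      rintro ω ⟨_, ha2⟩ ⟨hc1, _⟩
      exact absurd hc1 (not_le.mpr (ha2 c (Finset.mem_Ioc.mpr ⟨hac, hcn⟩)))
    intro k hk k' hk' hkk'
    rcases lt_or_gt_of_ne hkk' with h | h
    · exact key k k' h (Finset.mem_Icc.mp (by simpa using hk')).2
    · exact (key k' k h (Finset.mem_Icc.mp (by simpa using hk)).2).symm
  -- the full product
  set FP : (ℕ → ℝ) → ℝ≥0∞ := fun ω => ∏ i ∈ Finset.Icc 1 n, g0 (ω i) with hFPdef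
  -- per-k Chernoff bound
  have hkey : ∀ k ∈ Finset.Icc 1 n,
      ENNReal.ofReal (Real.exp b) * P (B k) ≤ ∫⁻ ω in B k, FP ω ∂P := by
    intro k hk
    obtain ⟨hk1, hkn⟩ := Finset.mem_Icc.mp hk
    -- Markov step on the window [k, n]
    have step1 : ENNReal.ofReal (Real.exp b) * P (B k)
        ≤ ∫⁻ ω in B k, ∏ i ∈ Finset.Icc k n, g0 (ω i) ∂P := by
      rw [← setLIntegral_const (B k) (ENNReal.ofReal (Real.exp b))]
      refine setLIntegral_mono' (hBmeas k) fun ω hω => ?_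
      have hb' : b ≤ S k ω := hω.1
      have hprod : Real.exp (S k ω) = ∏ i ∈ Finset.Icc k n, f1 (ω i) / f0 (ω i) := by
        rw [hSdef]
        rw [Real.exp_sum]
        refine Finset.prod_congr rfl fun i _ => ?_
        exact Real.exp_log (div_pos (hf1_pos _) (hf0_pos _))
      calc ENNReal.ofReal (Real.exp b)
          ≤ ENNReal.ofReal (Real.exp (S k ω)) :=
            ENNReal.ofReal_le_ofReal (Real.exp_le_exp.mpr hb')
        _ = ENNReal.ofReal (∏ i ∈ Finset.Icc k n, f1 (ω i) / f0 (ω i)) := by rw [hprod]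
        _ = ∏ i ∈ Finset.Icc k n, g0 (ω i) :=
            ENNReal.ofReal_prod_of_nonneg fun i _ =>
              (div_pos (hf1_pos _) (hf0_pos _)).le
    -- extend the window to [1, n] using independence
    have step2 : ∫⁻ ω in B k, ∏ i ∈ Finset.Icc k n, g0 (ω i) ∂P
        = ∫⁻ ω in B k, FP ω ∂P := by
      set s1 : Finset ℕ := (Finset.Icc 1 n).filter (fun i => i < k) with hs1
      have hIcc_eq : (Finset.Icc 1 n).filter (fun i => ¬ i < k) = Finset.Icc k n := by
        ext i
        simp only [Finset.mem_filter, Finset.mem_Icc, not_lt]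
        omega
      have hdis : Disjoint (↑(Finset.Icc k n) : Set ℕ) (↑s1 : Set ℕ) := by
        rw [← hIcc_eq, hs1]
        exact Finset.disjoint_coe.mpr
          ((Finset.disjoint_filter_filter_not (Finset.Icc 1 n) (Finset.Icc 1 n)
            (fun i => i < k)).symm)
      have hs1_meas : Measurable[coordSA (↑s1 : Set ℕ)]
          (fun ω : ℕ → ℝ => ∏ i ∈ s1, g0 (ω i)) :=
        Finset.measurable_prod s1 fun i hi => hg0.comp (measurable_coord (by simpa using hi))
      have hF_meas : Measurable[coordSA (↑(Finset.Icc k n) : Set ℕ)]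
          ((B k).indicator (fun ω => ∏ i ∈ Finset.Icc k n, g0 (ω i))) :=
        Measurable.indicator
          (Finset.measurable_prod _ fun i hi => hg0.comp (measurable_coord (by simpa using hi)))
          (hB_co k)
      have hmul : ∀ ω, (B k).indicator (fun ω => ∏ i ∈ Finset.Icc k n, g0 (ω i)) ω
          * ∏ i ∈ s1, g0 (ω i) = (B k).indicator FP ω := by
        intro ω
        by_cases hω : ω ∈ B k
        · rw [Set.indicator_of_mem hω, Set.indicator_of_mem hω]
          show (∏ i ∈ Finset.Icc k n, g0 (ω i)) * ∏ i ∈ s1, g0 (ω i)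
            = ∏ i ∈ Finset.Icc 1 n, g0 (ω i)
          rw [← Finset.prod_filter_mul_prod_filter_not (Finset.Icc 1 n) (fun i => i < k)
            (fun i => g0 (ω i)), hIcc_eq]
          exact mul_comm _ _
        · rw [Set.indicator_of_notMem hω, Set.indicator_of_notMem hω, zero_mul]
      calc ∫⁻ ω in B k, ∏ i ∈ Finset.Icc k n, g0 (ω i) ∂P
          = ∫⁻ ω, (B k).indicator (fun ω => ∏ i ∈ Finset.Icc k n, g0 (ω i)) ω ∂P :=
            (lintegral_indicator (hBmeas k) _).symm
        _ = (∫⁻ ω, (B k).indicator (fun ω => ∏ i ∈ Finset.Icc k n, g0 (ω i)) ω ∂P)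
            * ∫⁻ ω, ∏ i ∈ s1, g0 (ω i) ∂P := by
            rw [lintegral_prod_coord hiid hg0 hone s1, mul_one]
        _ = ∫⁻ ω, (B k).indicator (fun ω => ∏ i ∈ Finset.Icc k n, g0 (ω i)) ω
            * ∏ i ∈ s1, g0 (ω i) ∂P :=
            (lintegral_mul_coordSA hiid hdis hF_meas hs1_meas).symm
        _ = ∫⁻ ω, (B k).indicator FP ω ∂P := lintegral_congr hmul
        _ = ∫⁻ ω in B k, FP ω ∂P := lintegral_indicator (hBmeas k) _
    exact step1.trans (le_of_eq step2)
  -- put everything together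
  calc ENNReal.ofReal (Real.exp b) * P {ω | b ≤ cusum (llr f0 f1 ω) n}
      ≤ ENNReal.ofReal (Real.exp b) * ∑ k ∈ Finset.Icc 1 n, P (B k) :=
        mul_le_mul_right ((measure_mono hcover).trans (measure_biUnion_finset_le _ _)) _
    _ = ∑ k ∈ Finset.Icc 1 n, ENNReal.ofReal (Real.exp b) * P (B k) := by
        rw [Finset.mul_sum]
    _ ≤ ∑ k ∈ Finset.Icc 1 n, ∫⁻ ω in B k, FP ω ∂P := Finset.sum_le_sum hkey
    _ = ∫⁻ ω in ⋃ k ∈ Finset.Icc 1 n, B k, FP ω ∂P :=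
        (lintegral_biUnion_finset hdisj (fun k _ => hBmeas k) _).symm
    _ ≤ ∫⁻ ω, FP ω ∂P := setLIntegral_le_lintegral _ _
    _ = 1 := lintegral_prod_coord hiid hg0 hone _

/-- **TVT-CuSum test: false alarm probability.**  For any horizon `T ∈ ℕ`, any `r > 1` and any
`δF ∈ (0,1)`, under the pre-change measure `P∞` (coordinates i.i.d. with density `f0`),
`P∞(τ_r ≤ T) ≤ δF`. -/
theorem tvt_cusum_false_alarm
    (f0 f1 : ℝ → ℝ)
    (hf0_pos : ∀ x, 0 < f0 x) (hf1_pos : ∀ x, 0 < f1 x)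
    (hf0_meas : Measurable f0) (hf1_meas : Measurable f1)
    (hf0_int : ∫ x, f0 x = 1) (hf1_int : ∫ x, f1 x = 1)
    (hne : volume {x | f0 x ≠ f1 x} ≠ 0)
    (P : Measure (ℕ → ℝ)) [IsProbabilityMeasure P]
    (hiid : iIndepFun (fun i (ω : ℕ → ℝ) => ω i) P)
    (hmarg : ∀ i, P.map (fun ω : ℕ → ℝ => ω i)
      = volume.withDensity (fun x => ENNReal.ofReal (f0 x)))
    (T : ℕ) (r : ℝ) (hr : 1 < r) (δF : ℝ) (hδF : δF ∈ Set.Ioo (0 : ℝ) 1) :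
    P {ω | tau f0 f1 r δF ω ≤ (T : ℕ∞)} ≤ ENNReal.ofReal δF := by
  obtain ⟨hδ0, hδ1⟩ := hδF
  have hsum_r : Summable (fun n : ℕ => (n : ℝ) ^ (-r)) :=
    Real.summable_nat_rpow.mpr (by linarith)
  have hzeta_eq : zeta r = ∑' n : ℕ, (n : ℝ) ^ (-r) := by
    rw [Summable.tsum_eq_zero_add hsum_r]
    rw [Nat.cast_zero, Real.zero_rpow (by intro h; apply absurd (neg_eq_zero.mp h); linarith),
      zero_add, zeta]
    exact tsum_congr fun n => by push_cast; ring_nf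
  have hzeta_ge1 : 1 ≤ zeta r := by
    rw [hzeta_eq]
    have h1 : ((1 : ℕ) : ℝ) ^ (-r) = 1 := by norm_num
    calc (1 : ℝ) = ((1 : ℕ) : ℝ) ^ (-r) := h1.symm
      _ ≤ ∑' n : ℕ, (n : ℝ) ^ (-r) :=
        Summable.le_tsum hsum_r 1 fun i _ => Real.rpow_nonneg (Nat.cast_nonneg i) _
  have hzeta_pos : (0 : ℝ) < zeta r := lt_of_lt_of_le one_pos hzeta_ge1
  -- per-horizon bound
  have hEn : ∀ n : ℕ, 1 ≤ n → P {ω | beta r δF n ≤ cusum (llr f0 f1 ω) n}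
      ≤ ENNReal.ofReal (δF / zeta r * (n : ℝ) ^ (-r)) := by
    intro n hn
    have hn0 : (0 : ℝ) < (n : ℝ) := by exact_mod_cast hn
    have hnr_pos : (0 : ℝ) < (n : ℝ) ^ r := Real.rpow_pos_of_pos hn0 r
    have hc_pos : (0 : ℝ) < zeta r * (n : ℝ) ^ r / δF := by positivity
    have hb := cusum_exp_bound f0 f1 hf0_pos hf1_pos hf0_meas hf1_meas hf1_int P hiid hmarg
      n hn (beta r δF n)
    have hP : P {ω | beta r δF n ≤ cusum (llr f0 f1 ω) n}
        ≤ (ENNReal.ofReal (Real.exp (beta r δF n)))⁻¹ :=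
      ENNReal.le_inv_iff_mul_le.mpr (by rwa [mul_comm])
    refine hP.trans (le_of_eq ?_)
    rw [← ENNReal.ofReal_inv_of_pos (Real.exp_pos _), ← Real.exp_neg]
    congr 1
    rw [_root_.beta, ← Real.log_inv, Real.exp_log (by positivity)]
    rw [Real.rpow_neg (Nat.cast_nonneg n), inv_div, ← div_div,
      div_eq_mul_inv (δF / zeta r)]
  -- inclusion of the stopping event in the union of exceedance events
  have hsubset : {ω | tau f0 f1 r δF ω ≤ (T : ℕ∞)} ⊆
      ⋃ n ∈ Finset.Icc 1 T, {ω | beta r δF n ≤ cusum (llr f0 f1 ω) n} := by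
    intro ω hω
    simp only [Set.mem_setOf_eq, tau] at hω
    rcases Set.eq_empty_or_nonempty
      {t : ℕ∞ | ∃ n : ℕ, t = (n : ℕ∞) ∧ 1 ≤ n ∧ beta r δF n ≤ cusum (llr f0 f1 ω) n}
      with hS | hS
    · rw [hS, sInf_empty] at hω
      exact absurd (top_le_iff.mp hω) (ENat.coe_ne_top T)
    · obtain ⟨m, hmeq, hm1, hmb⟩ := csInf_mem hS
      rw [hmeq] at hω
      have hmT : m ≤ T := by exact_mod_cast hω
      exact Set.mem_biUnion (Finset.mem_Icc.mpr ⟨hm1, hmT⟩) hmb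
  -- summing up
  have hreal : ∑ n ∈ Finset.Icc 1 T, δF / zeta r * (n : ℝ) ^ (-r) ≤ δF := by
    rw [← Finset.mul_sum]
    have hle : ∑ n ∈ Finset.Icc 1 T, (n : ℝ) ^ (-r) ≤ zeta r := by
      rw [hzeta_eq]
      exact Summable.sum_le_tsum _ (fun i _ => Real.rpow_nonneg (Nat.cast_nonneg i) _) hsum_r
    calc δF / zeta r * ∑ n ∈ Finset.Icc 1 T, (n : ℝ) ^ (-r)
        ≤ δF / zeta r * zeta r :=
          mul_le_mul_of_nonneg_left hle (div_nonneg hδ0.le hzeta_pos.le)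
      _ = δF := div_mul_cancel₀ δF (ne_of_gt hzeta_pos)
  calc P {ω | tau f0 f1 r δF ω ≤ (T : ℕ∞)}
      ≤ ∑ n ∈ Finset.Icc 1 T, P {ω | beta r δF n ≤ cusum (llr f0 f1 ω) n} :=
        (measure_mono hsubset).trans (measure_biUnion_finset_le _ _)
    _ ≤ ∑ n ∈ Finset.Icc 1 T, ENNReal.ofReal (δF / zeta r * (n : ℝ) ^ (-r)) :=
        Finset.sum_le_sum fun n hn => hEn n (Finset.mem_Icc.mp hn).1
    _ = ENNReal.ofReal (∑ n ∈ Finset.Icc 1 T, δF / zeta r * (n : ℝ) ^ (-r)) :=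
        (ENNReal.ofReal_sum_of_nonneg fun n _ =>
          mul_nonneg (div_nonneg hδ0.le hzeta_pos.le)
            (Real.rpow_nonneg (Nat.cast_nonneg n) _)).symm
    _ ≤ ENNReal.ofReal δF := ENNReal.ofReal_le_ofReal hreal

end
end

section
/- Fix j ∈ ℕ, r > 1 and δ_F ∈ (0,1). Under P_∞, the probability that there exists k ∈ {0,1,2,...} with (1/(j+k)^r) ∏_{i=j}^{j+k} f1(X_i)/f0(X_i) ≥ ζ(r)/δ_F is at most (δ_F/ζ(r)) · (1/j^r) · E_∞[f1(X_j)/f0(X_j)], which is at most δ_F/(ζ(r) j^r). -/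
open MeasureTheory ProbabilityTheory
open scoped ENNReal

noncomputable section

/-- The discounted likelihood-ratio process
`M_k = (1/(j+k)^r) ∏_{i=j}^{j+k} f1(X_i)/f0(X_i)` on trajectories `ω : ℕ → ℝ`. -/
def Mproc (f0 f1 : ℝ → ℝ) (j : ℕ) (r : ℝ) (k : ℕ) (ω : ℕ → ℝ) : ℝ :=
  (1 / ((j : ℝ) + (k : ℝ)) ^ r) * ∏ i ∈ Finset.Icc j (j + k), f1 (ω i) / f0 (ω i)

namespace DoobAux

/-- A random variable depending only on coordinates in `T` is independent of a function of a
coordinate outside `T`. -/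
lemma indep_of_coords (P : Measure (ℕ → ℝ)) [IsProbabilityMeasure P]
    (hiid : iIndepFun (fun i (ω : ℕ → ℝ) => ω i) P)
    (T : Finset ℕ) (i : ℕ) (hi : i ∉ T) (W : (ℕ → ℝ) → ℝ) (hW : Measurable W)
    (hdep : ∀ ω ω' : ℕ → ℝ, (∀ t ∈ T, ω t = ω' t) → W ω = W ω')
    (g : ℝ → ℝ) (hg : Measurable g) :
    IndepFun W (fun ω => g (ω i)) P := by
  classical
  set ext : ({x // x ∈ T} → ℝ) → (ℕ → ℝ) := fun v t => if h : t ∈ T then v ⟨t, h⟩ else 0 with hext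
  have hextm : Measurable ext := by
    apply measurable_pi_lambda
    intro t
    by_cases h : t ∈ T
    · simpa [hext, h] using measurable_pi_apply (⟨t, h⟩ : {x // x ∈ T})
    · simpa [hext, h] using measurable_const
  have hbase := hiid.indepFun_finset T {i} (Finset.disjoint_singleton_right.mpr hi)
    (fun k => measurable_pi_apply k)
  have hmem : i ∈ ({i} : Finset ℕ) := Finset.mem_singleton_self i
  have hcomp := hbase.comp (φ := W ∘ ext)
    (ψ := fun v : {x // x ∈ ({i} : Finset ℕ)} → ℝ => g (v ⟨i, hmem⟩))
    (hW.comp hextm) (hg.comp (measurable_pi_apply _))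
  have h1 : ((W ∘ ext) ∘ fun (ω : ℕ → ℝ) (t : {x // x ∈ T}) => ω t) = W := by
    funext ω
    exact hdep _ _ (fun t ht => by simp [hext, ht])
  have h2 : ((fun v : {x // x ∈ ({i} : Finset ℕ)} → ℝ => g (v ⟨i, hmem⟩)) ∘
      fun (ω : ℕ → ℝ) (t : {x // x ∈ ({i} : Finset ℕ)}) => ω t) = fun ω => g (ω i) := rfl
  rwa [h1, h2] at hcomp

variable {f0 f1 : ℝ → ℝ} {j : ℕ} {r : ℝ}

lemma integrable_f1 (hf1_int : ∫ x, f1 x = 1) : Integrable f1 := by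
  by_contra h
  rw [integral_undef h] at hf1_int
  norm_num at hf1_int

lemma Y_key (hf0_pos : ∀ x, 0 < f0 x)
    (hf0_meas : Measurable f0) (hf1_meas : Measurable f1) (hf1_int : ∫ x, f1 x = 1)
    (P : Measure (ℕ → ℝ)) [IsProbabilityMeasure P]
    (hmarg : ∀ i, P.map (fun ω : ℕ → ℝ => ω i)
      = volume.withDensity (fun x => ENNReal.ofReal (f0 x))) (i : ℕ) :
    Integrable (fun ω => f1 (ω i) / f0 (ω i)) P ∧ ∫ ω, f1 (ω i) / f0 (ω i) ∂P = 1 := by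
  have hg : Measurable fun x => f1 x / f0 x := hf1_meas.div hf0_meas
  have hd : (fun x : ℝ => ENNReal.ofReal (f0 x))
      = fun x => ((fun y => (f0 y).toNNReal) x : ℝ≥0∞) := rfl
  have hf0nn : Measurable fun x => (f0 x).toNNReal := hf0_meas.real_toNNReal
  have hsmul : (fun x : ℝ => (f0 x).toNNReal • (f1 x / f0 x)) = f1 := by
    funext x
    rw [NNReal.smul_def, Real.coe_toNNReal _ (hf0_pos x).le, smul_eq_mul, mul_comm,
      div_mul_cancel₀ _ (hf0_pos x).ne']
  have hint : Integrable (fun ω => f1 (ω i) / f0 (ω i)) P := by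
    have hmap : Integrable (fun x => f1 x / f0 x) (P.map (fun ω : ℕ → ℝ => ω i)) := by
      rw [hmarg i, hd, integrable_withDensity_iff_integrable_smul hf0nn, hsmul]
      exact integrable_f1 hf1_int
    rw [integrable_map_measure hg.aestronglyMeasurable (measurable_pi_apply i).aemeasurable]
      at hmap
    exact hmap
  refine ⟨hint, ?_⟩
  have : ∫ ω, f1 (ω i) / f0 (ω i) ∂P
      = ∫ x, f1 x / f0 x ∂(P.map (fun ω : ℕ → ℝ => ω i)) := by
    rw [integral_map (measurable_pi_apply i).aemeasurable hg.aestronglyMeasurable]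
  rw [this, hmarg i, hd, integral_withDensity_eq_integral_smul hf0nn, hsmul, hf1_int]

/-- The running product part. -/
def S (f0 f1 : ℝ → ℝ) (j n : ℕ) (ω : ℕ → ℝ) : ℝ :=
  ∏ i ∈ Finset.Icc j (j + n), f1 (ω i) / f0 (ω i)

lemma Mproc_eq (k : ℕ) (ω : ℕ → ℝ) :
    Mproc f0 f1 j r k ω = (1 / ((j : ℝ) + (k : ℝ)) ^ r) * S f0 f1 j k ω := rfl

lemma S_succ (n : ℕ) (ω : ℕ → ℝ) :
    S f0 f1 j (n + 1) ω = S f0 f1 j n ω * (f1 (ω (j + n + 1)) / f0 (ω (j + n + 1))) := by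
  have : j + (n + 1) = (j + n) + 1 := by omega
  rw [S, this, Finset.prod_Icc_succ_top (by omega)]
  rfl

lemma S_congr (n : ℕ) (ω ω' : ℕ → ℝ) (h : ∀ t ∈ Finset.Icc j (j + n), ω t = ω' t) :
    S f0 f1 j n ω = S f0 f1 j n ω' :=
  Finset.prod_congr rfl fun i hi => by rw [h i hi]

lemma Mproc_congr (k n : ℕ) (hk : k ≤ n) (ω ω' : ℕ → ℝ)
    (h : ∀ t ∈ Finset.Icc j (j + n), ω t = ω' t) :
    Mproc f0 f1 j r k ω = Mproc f0 f1 j r k ω' := by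
  unfold Mproc
  congr 1
  exact Finset.prod_congr rfl fun i hi => by
    rw [h i (Finset.Icc_subset_Icc_right (by omega) hi)]

lemma S_meas (hf0 : Measurable f0) (hf1 : Measurable f1) (n : ℕ) :
    Measurable (S f0 f1 j n) :=
  Finset.measurable_prod _ fun i _ =>
    (hf1.comp (measurable_pi_apply i)).div (hf0.comp (measurable_pi_apply i))

lemma Mproc_meas (hf0 : Measurable f0) (hf1 : Measurable f1) (k : ℕ) :
    Measurable (Mproc f0 f1 j r k) :=
  (S_meas hf0 hf1 k).const_mul _

lemma S_nonneg (hf0 : ∀ x, 0 < f0 x) (hf1 : ∀ x, 0 < f1 x) (n : ℕ) (ω : ℕ → ℝ) :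
    0 ≤ S f0 f1 j n ω :=
  Finset.prod_nonneg fun _ _ => div_nonneg (hf1 _).le (hf0 _).le

lemma Mproc_nonneg (hf0 : ∀ x, 0 < f0 x) (hf1 : ∀ x, 0 < f1 x) (k : ℕ) (ω : ℕ → ℝ) :
    0 ≤ Mproc f0 f1 j r k ω :=
  mul_nonneg (by positivity) (S_nonneg hf0 hf1 k ω)

open Classical in
/-- The process stopped at the first time it reaches level `c` (up to time `n`). -/
def stopP (f0 f1 : ℝ → ℝ) (j : ℕ) (r : ℝ) (c : ℝ) : ℕ → (ℕ → ℝ) → ℝ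
  | 0 => Mproc f0 f1 j r 0
  | n + 1 => fun ω =>
      if ∃ k ≤ n, c ≤ Mproc f0 f1 j r k ω then stopP f0 f1 j r c n ω
      else Mproc f0 f1 j r (n + 1) ω

lemma stopP_succ (c : ℝ) (n : ℕ) (ω : ℕ → ℝ) :
    stopP f0 f1 j r c (n + 1) ω =
      if ∃ k ≤ n, c ≤ Mproc f0 f1 j r k ω then stopP f0 f1 j r c n ω
      else Mproc f0 f1 j r (n + 1) ω := by
  rw [stopP]

lemma stopP_of_not (c : ℝ) (n : ℕ) (ω : ℕ → ℝ)
    (h : ¬ ∃ k ≤ n, c ≤ Mproc f0 f1 j r k ω) :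
    stopP f0 f1 j r c n ω = Mproc f0 f1 j r n ω := by
  cases n with
  | zero => rfl
  | succ m =>
      rw [stopP_succ, if_neg]
      intro ⟨k, hk, hc⟩
      exact h ⟨k, by omega, hc⟩

lemma stopP_ge (c : ℝ) (n : ℕ) (ω : ℕ → ℝ)
    (h : ∃ k ≤ n, c ≤ Mproc f0 f1 j r k ω) :
    c ≤ stopP f0 f1 j r c n ω := by
  induction n with
  | zero =>
      obtain ⟨k, hk, hc⟩ := h
      interval_cases k
      exact hc
  | succ m ih =>
      rw [stopP_succ]
      by_cases hE : ∃ k ≤ m, c ≤ Mproc f0 f1 j r k ω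
      · rw [if_pos hE]; exact ih hE
      · rw [if_neg hE]
        obtain ⟨k, hk, hc⟩ := h
        have : k = m + 1 := by
          by_contra hne
          exact hE ⟨k, by omega, hc⟩
        rwa [this] at hc

lemma stopP_nonneg (hf0 : ∀ x, 0 < f0 x) (hf1 : ∀ x, 0 < f1 x) (c : ℝ) (n : ℕ) (ω : ℕ → ℝ) :
    0 ≤ stopP f0 f1 j r c n ω := by
  induction n with
  | zero => exact Mproc_nonneg hf0 hf1 0 ω
  | succ m ih =>
      rw [stopP_succ]
      split
      · exact ih
      · exact Mproc_nonneg hf0 hf1 (m + 1) ω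

lemma E_meas (hf0 : Measurable f0) (hf1 : Measurable f1) (c : ℝ) (n : ℕ) :
    MeasurableSet {ω : ℕ → ℝ | ∃ k ≤ n, c ≤ Mproc f0 f1 j r k ω} := by
  have : {ω : ℕ → ℝ | ∃ k ≤ n, c ≤ Mproc f0 f1 j r k ω}
      = ⋃ k ∈ Set.Iic n, {ω | c ≤ Mproc f0 f1 j r k ω} := by
    ext ω; simp [Set.mem_iUnion]
  rw [this]
  exact MeasurableSet.biUnion (Set.to_countable _)
    (fun k _ => measurableSet_le measurable_const (Mproc_meas hf0 hf1 k))

lemma stopP_meas (hf0 : Measurable f0) (hf1 : Measurable f1) (c : ℝ) (n : ℕ) :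
    Measurable (stopP f0 f1 j r c n) := by
  induction n with
  | zero => exact Mproc_meas hf0 hf1 0
  | succ m ih =>
      have : stopP f0 f1 j r c (m + 1) = fun ω =>
          if (fun ω => ∃ k ≤ m, c ≤ Mproc f0 f1 j r k ω) ω then stopP f0 f1 j r c m ω
          else Mproc f0 f1 j r (m + 1) ω := by
        funext ω; rw [stopP_succ]
      rw [this]
      exact Measurable.ite (E_meas hf0 hf1 c m) ih (Mproc_meas hf0 hf1 (m + 1))

section Main

variable (hf0_pos : ∀ x, 0 < f0 x) (hf1_pos : ∀ x, 0 < f1 x)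
    (hf0_meas : Measurable f0) (hf1_meas : Measurable f1) (hf1_int : ∫ x, f1 x = 1)
    (P : Measure (ℕ → ℝ)) [IsProbabilityMeasure P]
    (hiid : iIndepFun (fun i (ω : ℕ → ℝ) => ω i) P)
    (hmarg : ∀ i, P.map (fun ω : ℕ → ℝ => ω i)
      = volume.withDensity (fun x => ENNReal.ofReal (f0 x)))

include hf0_pos hf1_pos hf0_meas hf1_meas hf1_int hiid hmarg

omit hf0_pos hf1_pos hf1_int hmarg in
lemma indep_S (n : ℕ) : IndepFun (S f0 f1 j n)
    (fun ω => f1 (ω (j + n + 1)) / f0 (ω (j + n + 1))) P := by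
  apply indep_of_coords P hiid (Finset.Icc j (j + n)) (j + n + 1)
    (by simp) _ (S_meas hf0_meas hf1_meas n) (S_congr n) _ (hf1_meas.div hf0_meas)

omit hf1_pos in
lemma int_S (n : ℕ) : Integrable (S f0 f1 j n) P := by
  induction n with
  | zero =>
      have := (Y_key hf0_pos hf0_meas hf1_meas hf1_int P hmarg j).1
      have hS : S f0 f1 j 0 = fun ω => f1 (ω j) / f0 (ω j) := by
        funext ω; simp [S]
      rwa [hS]
  | succ m ih =>
      have hint := (Y_key hf0_pos hf0_meas hf1_meas hf1_int P hmarg (j + m + 1)).1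
      have := (indep_S hf0_meas hf1_meas P hiid m).integrable_mul ih hint
      have hS : S f0 f1 j (m + 1) = S f0 f1 j m *
          fun ω => f1 (ω (j + m + 1)) / f0 (ω (j + m + 1)) := by
        funext ω; rw [S_succ]; rfl
      rwa [hS]

omit hf1_pos in
lemma int_Mproc (k : ℕ) : Integrable (Mproc f0 f1 j r k) P := by
  have : Mproc f0 f1 j r k = fun ω =>
      (1 / ((j : ℝ) + (k : ℝ)) ^ r) * S f0 f1 j k ω := rfl
  rw [this]
  exact (int_S hf0_pos hf0_meas hf1_meas hf1_int P hiid hmarg k).const_mul _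

omit hf1_pos in
lemma int_stopP (c : ℝ) (n : ℕ) : Integrable (stopP f0 f1 j r c n) P := by
  induction n with
  | zero => exact int_Mproc hf0_pos hf0_meas hf1_meas hf1_int P hiid hmarg 0
  | succ m ih =>
      classical
      have heq : stopP f0 f1 j r c (m + 1) =
          ({ω : ℕ → ℝ | ∃ k ≤ m, c ≤ Mproc f0 f1 j r k ω}).indicator (stopP f0 f1 j r c m)
          + ({ω : ℕ → ℝ | ∃ k ≤ m, c ≤ Mproc f0 f1 j r k ω}ᶜ).indicator
              (Mproc f0 f1 j r (m + 1)) := by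
        funext ω
        by_cases h : ∃ k ≤ m, c ≤ Mproc f0 f1 j r k ω
        · simp [stopP_succ, h, Set.indicator_of_mem, Set.indicator_of_notMem,
            Set.mem_setOf_eq]
        · simp [stopP_succ, h, Set.indicator_of_notMem, Set.mem_setOf_eq]
      rw [heq]
      exact (ih.indicator (E_meas hf0_meas hf1_meas c m)).add
        ((int_Mproc hf0_pos hf0_meas hf1_meas hf1_int P hiid hmarg (m + 1)).indicator
          (E_meas hf0_meas hf1_meas c m).compl)

lemma integral_stopP_succ_le (hj : 1 ≤ j) (hr : 0 ≤ r) (c : ℝ) (n : ℕ) :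
    ∫ ω, stopP f0 f1 j r c (n + 1) ω ∂P ≤ ∫ ω, stopP f0 f1 j r c n ω ∂P := by
  classical
  set E : Set (ℕ → ℝ) := {ω | ∃ k ≤ n, c ≤ Mproc f0 f1 j r k ω} with hE
  set W : (ℕ → ℝ) → ℝ := Eᶜ.indicator (S f0 f1 j n) with hW
  set Y : (ℕ → ℝ) → ℝ := fun ω => f1 (ω (j + n + 1)) / f0 (ω (j + n + 1)) with hY
  set c1 : ℝ := 1 / ((j : ℝ) + (n : ℝ)) ^ r with hc1
  set c2 : ℝ := 1 / ((j : ℝ) + ((n : ℝ) + 1)) ^ r with hc2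
  have hWmeas : Measurable W :=
    (S_meas hf0_meas hf1_meas n).indicator (E_meas hf0_meas hf1_meas c n).compl
  have hWdep : ∀ ω ω' : ℕ → ℝ, (∀ t ∈ Finset.Icc j (j + n), ω t = ω' t) → W ω = W ω' := by
    intro ω ω' hagree
    have hmem : ω ∈ E ↔ ω' ∈ E := by
      constructor <;> rintro ⟨k, hk, hc⟩
      · exact ⟨k, hk, by rwa [Mproc_congr k n hk ω ω' hagree] at hc⟩
      · exact ⟨k, hk, by rwa [Mproc_congr k n hk ω ω' hagree]⟩
    by_cases h : ω ∈ E
    · rw [hW]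
      rw [Set.indicator_of_notMem (by simpa using h),
        Set.indicator_of_notMem (by simpa using hmem.mp h)]
    · rw [hW, Set.indicator_of_mem (by simpa using h),
        Set.indicator_of_mem (by simpa using fun h' => h (hmem.mpr h'))]
      exact S_congr n ω ω' hagree
  have hYint := (Y_key hf0_pos hf0_meas hf1_meas hf1_int P hmarg (j + n + 1))
  have hind : IndepFun W Y P :=
    indep_of_coords P hiid (Finset.Icc j (j + n)) (j + n + 1) (by simp) W hWmeas hWdep
      _ (hf1_meas.div hf0_meas)
  have hWint : Integrable W P :=
    (int_S hf0_pos hf0_meas hf1_meas hf1_int P hiid hmarg n).indicator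
      (E_meas hf0_meas hf1_meas c n).compl
  have hWYint : Integrable (W * Y) P := hind.integrable_mul hWint hYint.1
  have hmul : ∫ ω, (W * Y) ω ∂P = ∫ ω, W ω ∂P := by
    rw [hind.integral_mul_eq_mul_integral hWint.1 hYint.1.1, hYint.2, mul_one]
  have hkey : (fun ω => stopP f0 f1 j r c (n + 1) ω - stopP f0 f1 j r c n ω)
      = fun ω => c2 * (W * Y) ω - c1 * W ω := by
    funext ω
    by_cases h : ω ∈ E
    · have h1 : stopP f0 f1 j r c (n + 1) ω = stopP f0 f1 j r c n ω := by
        rw [stopP_succ, if_pos (show ∃ k ≤ n, c ≤ Mproc f0 f1 j r k ω from h)]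
      have h2 : W ω = 0 := Set.indicator_of_notMem (by simpa using h) _
      simp [h1, h2, Pi.mul_apply]
    · have h1 : stopP f0 f1 j r c (n + 1) ω = Mproc f0 f1 j r (n + 1) ω := by
        rw [stopP_succ, if_neg (show ¬ ∃ k ≤ n, c ≤ Mproc f0 f1 j r k ω from h)]
      have h2 : stopP f0 f1 j r c n ω = Mproc f0 f1 j r n ω := stopP_of_not c n ω h
      have h3 : W ω = S f0 f1 j n ω := Set.indicator_of_mem (by simpa using h) _
      rw [h1, h2, Pi.mul_apply, h3]
      have h4 : Mproc f0 f1 j r (n + 1) ω = c2 * (S f0 f1 j n ω * Y ω) := by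
        rw [Mproc_eq, S_succ, hc2, hY]
        push_cast
        ring_nf
      have h5 : Mproc f0 f1 j r n ω = c1 * S f0 f1 j n ω := rfl
      rw [h4, h5]
  have hbase : ((j : ℝ) + (n : ℝ)) ^ r > 0 := by
    apply Real.rpow_pos_of_pos
    have : (1 : ℝ) ≤ (j : ℝ) := by exact_mod_cast hj
    linarith [Nat.cast_nonneg (α := ℝ) n]
  have hc21 : c2 ≤ c1 := by
    rw [hc1, hc2]
    apply one_div_le_one_div_of_le hbase
    apply Real.rpow_le_rpow (by positivity) (by linarith) hr
  have hWnonneg : 0 ≤ ∫ ω, W ω ∂P := by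
    apply integral_nonneg
    intro ω
    exact Set.indicator_nonneg (fun x _ => S_nonneg hf0_pos hf1_pos n x) ω
  have hsub : ∫ ω, stopP f0 f1 j r c (n + 1) ω ∂P - ∫ ω, stopP f0 f1 j r c n ω ∂P
      = (c2 - c1) * ∫ ω, W ω ∂P := by
    rw [← integral_sub
      (int_stopP hf0_pos hf0_meas hf1_meas hf1_int P hiid hmarg c (n + 1))
      (int_stopP hf0_pos hf0_meas hf1_meas hf1_int P hiid hmarg c n)]
    simp_rw [hkey]
    rw [integral_sub (hWYint.const_mul c2) (hWint.const_mul c1),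
      integral_const_mul, integral_const_mul, hmul]
    ring
  nlinarith [mul_nonneg (sub_nonneg.mpr hc21) hWnonneg]

lemma integral_stopP_le (hj : 1 ≤ j) (hr : 0 ≤ r) (c : ℝ) (n : ℕ) :
    ∫ ω, stopP f0 f1 j r c n ω ∂P ≤ ∫ ω, Mproc f0 f1 j r 0 ω ∂P := by
  induction n with
  | zero => exact le_of_eq rfl
  | succ m ih =>
      exact le_trans
        (integral_stopP_succ_le hf0_pos hf1_pos hf0_meas hf1_meas hf1_int P hiid hmarg
          hj hr c m) ih

end Main
end DoobAux

open DoobAux in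
/-- **Maximal inequality (Doob) for the discounted likelihood-ratio process.** -/
theorem doob_bound_discounted_lr
    (f0 f1 : ℝ → ℝ)
    (hf0_pos : ∀ x, 0 < f0 x) (hf1_pos : ∀ x, 0 < f1 x)
    (hf0_meas : Measurable f0) (hf1_meas : Measurable f1)
    (hf0_int : ∫ x, f0 x = 1) (hf1_int : ∫ x, f1 x = 1)
    (P : Measure (ℕ → ℝ)) [IsProbabilityMeasure P]
    (hiid : iIndepFun (fun i (ω : ℕ → ℝ) => ω i) P)
    (hmarg : ∀ i, P.map (fun ω : ℕ → ℝ => ω i)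
      = volume.withDensity (fun x => ENNReal.ofReal (f0 x)))
    (j : ℕ) (hj : 1 ≤ j) (r : ℝ) (hr : 1 < r) (δF : ℝ) (hδF : δF ∈ Set.Ioo (0 : ℝ) 1) :
    P {ω | ∃ k : ℕ, zeta r / δF ≤ Mproc f0 f1 j r k ω}
      ≤ ENNReal.ofReal
          ((δF / zeta r) * (1 / (j : ℝ) ^ r) * ∫ ω, f1 (ω j) / f0 (ω j) ∂P) ∧
    ENNReal.ofReal ((δF / zeta r) * (1 / (j : ℝ) ^ r) * ∫ ω, f1 (ω j) / f0 (ω j) ∂P)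
      ≤ ENNReal.ofReal (δF / (zeta r * (j : ℝ) ^ r)) := by
  obtain ⟨hδ0, hδ1⟩ := hδF
  -- zeta is positive
  have hsum : Summable (fun n : ℕ => ((n : ℝ) + 1) ^ (-r)) := by
    have h1 : Summable (fun m : ℕ => (m : ℝ) ^ (-r)) :=
      Real.summable_nat_rpow.mpr (by linarith)
    have h2 := h1.comp_injective (add_left_injective 1)
    have : ((fun m : ℕ => (m : ℝ) ^ (-r)) ∘ fun n : ℕ => n + 1)
        = fun n : ℕ => ((n : ℝ) + 1) ^ (-r) := by
      funext n; simp [Function.comp]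
    rwa [this] at h2
  have hζpos : 0 < zeta r := by
    have := Summable.tsum_pos hsum (fun i => (Real.rpow_pos_of_pos (by positivity) (-r)).le) 0
      (Real.rpow_pos_of_pos (by norm_num) (-r))
    simpa [zeta] using this
  set c : ℝ := zeta r / δF with hc
  have hcpos : 0 < c := div_pos hζpos hδ0
  -- the expectation of Y_j
  have hYj := Y_key hf0_pos hf0_meas hf1_meas hf1_int P hmarg j
  set I : ℝ := ∫ ω, f1 (ω j) / f0 (ω j) ∂P with hI
  have hIone : I = 1 := hYj.2
  have hjpos : (0 : ℝ) < (j : ℝ) ^ r :=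
    Real.rpow_pos_of_pos (by exact_mod_cast Nat.lt_of_lt_of_le Nat.zero_lt_one hj) r
  -- E[M_0]
  have hM0 : ∫ ω, Mproc f0 f1 j r 0 ω ∂P = (1 / (j : ℝ) ^ r) * I := by
    have : Mproc f0 f1 j r 0 = fun ω => (1 / (j : ℝ) ^ r) * (f1 (ω j) / f0 (ω j)) := by
      funext ω
      simp [Mproc]
    rw [this, integral_const_mul]
  -- bound for each finite horizon
  have hAn : ∀ n : ℕ, P {ω | ∃ k ≤ n, c ≤ Mproc f0 f1 j r k ω}
      ≤ ENNReal.ofReal ((δF / zeta r) * (1 / (j : ℝ) ^ r) * I) := by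
    intro n
    have hmono : P {ω | ∃ k ≤ n, c ≤ Mproc f0 f1 j r k ω}
        ≤ P {ω | c ≤ stopP f0 f1 j r c n ω} :=
      measure_mono (fun ω h => stopP_ge c n ω h)
    have hMarkov := mul_meas_ge_le_integral_of_nonneg (f := stopP f0 f1 j r c n)
      (Filter.Eventually.of_forall (stopP_nonneg hf0_pos hf1_pos c n))
      (int_stopP hf0_pos hf0_meas hf1_meas hf1_int P hiid hmarg c n) c
    have hle : ∫ ω, stopP f0 f1 j r c n ω ∂P ≤ (1 / (j : ℝ) ^ r) * I := by
      rw [← hM0]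
      exact integral_stopP_le hf0_pos hf1_pos hf0_meas hf1_meas hf1_int P hiid hmarg
        hj (by linarith) c n
    have htop : P {ω | ∃ k ≤ n, c ≤ Mproc f0 f1 j r k ω} ≠ ⊤ := measure_ne_top P _
    have htop2 : P {ω | c ≤ stopP f0 f1 j r c n ω} ≠ ⊤ := measure_ne_top P _
    have hreal : (P {ω | ∃ k ≤ n, c ≤ Mproc f0 f1 j r k ω}).toReal
        ≤ ((1 / (j : ℝ) ^ r) * I) / c := by
      have h1 : (P {ω | ∃ k ≤ n, c ≤ Mproc f0 f1 j r k ω}).toReal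
          ≤ (P {ω | c ≤ stopP f0 f1 j r c n ω}).toReal :=
        ENNReal.toReal_mono htop2 hmono
      have h2 : c * (P {ω | c ≤ stopP f0 f1 j r c n ω}).toReal
          ≤ (1 / (j : ℝ) ^ r) * I := le_trans hMarkov hle
      rw [le_div_iff₀ hcpos]
      nlinarith
    calc P {ω | ∃ k ≤ n, c ≤ Mproc f0 f1 j r k ω}
        = ENNReal.ofReal (P {ω | ∃ k ≤ n, c ≤ Mproc f0 f1 j r k ω}).toReal :=
          (ENNReal.ofReal_toReal htop).symm
      _ ≤ ENNReal.ofReal (((1 / (j : ℝ) ^ r) * I) / c) := ENNReal.ofReal_le_ofReal hreal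
      _ = ENNReal.ofReal ((δF / zeta r) * (1 / (j : ℝ) ^ r) * I) := by
          congr 1
          rw [hc]
          field_simp
  constructor
  · -- pass to the limit over n
    have hUnion : {ω : ℕ → ℝ | ∃ k : ℕ, c ≤ Mproc f0 f1 j r k ω}
        = ⋃ n : ℕ, {ω | ∃ k ≤ n, c ≤ Mproc f0 f1 j r k ω} := by
      ext ω
      simp only [Set.mem_setOf_eq, Set.mem_iUnion]
      constructor
      · rintro ⟨k, hk⟩; exact ⟨k, k, le_refl k, hk⟩
      · rintro ⟨n, k, _, hk⟩; exact ⟨k, hk⟩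
    rw [hUnion]
    rw [Directed.measure_iUnion]
    · exact iSup_le hAn
    · apply Monotone.directed_le
      intro a b hab ω
      rintro ⟨k, hk, hck⟩
      exact ⟨k, le_trans hk hab, hck⟩
  · rw [hIone, mul_one]
    apply ENNReal.ofReal_le_ofReal
    apply le_of_eq
    field_simp
end
end

section
/- For every ν, d ∈ ℕ with ν + d ≤ T, every θ ∈ (0,1), every r > 1 and δ_F ∈ (0,1), the TVT-CuSum stopping time satisfies P_ν(τ_r ≥ ν + d) ≤ ( ζ(r) (ν+d)^r / δ_F )^θ · exp( d Λ(θ) ), and consequently P_ν(τ_r ≥ ν + d) ≤ ( ζ(r) T^r / δ_F )^θ · exp( d Λ(θ) ). -/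
open MeasureTheory ProbabilityTheory
open scoped ENNReal

noncomputable section

/-- Cumulant generating function `Λ(θ) = log ∫ f0(x)^θ f1(x)^{1-θ} dx`. -/
def Lam (f0 f1 : ℝ → ℝ) (θ : ℝ) : ℝ := Real.log (∫ x : ℝ, f0 x ^ θ * f1 x ^ (1 - θ))

lemma zeta_summable {r : ℝ} (hr : 1 < r) : Summable (fun n : ℕ => ((n : ℝ) + 1) ^ (-r)) := by
  have h := (Real.summable_nat_rpow (p := -r)).mpr (by linarith)
  exact (h.comp_injective Nat.succ_injective).congr
    (fun n => by simp [Function.comp, Nat.succ_eq_add_one])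

lemma zeta_pos {r : ℝ} (hr : 1 < r) : 0 < zeta r := by
  refine Summable.tsum_pos (zeta_summable hr) (fun n => Real.rpow_nonneg (by positivity) _) 0 ?_
  norm_num

/-- **Chernoff bound on the delay of the TVT-CuSum test.**  For every `ν, d ≥ 1` with
`ν + d ≤ T`, every `θ ∈ (0,1)`, `r > 1` and `δF ∈ (0,1)`,
`P_ν(τ_r ≥ ν+d) ≤ (ζ(r)(ν+d)^r/δF)^θ exp(d Λ(θ))`, and consequently
`P_ν(τ_r ≥ ν+d) ≤ (ζ(r) T^r/δF)^θ exp(d Λ(θ))`. -/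
theorem tvt_cusum_delay_chernoff
    (f0 f1 : ℝ → ℝ)
    (hf0_pos : ∀ x, 0 < f0 x) (hf1_pos : ∀ x, 0 < f1 x)
    (hf0_meas : Measurable f0) (hf1_meas : Measurable f1)
    (hf0_int : ∫ x, f0 x = 1) (hf1_int : ∫ x, f1 x = 1)
    (Pν : ℕ → Measure (ℕ → ℝ)) (hprob : ∀ ν, IsProbabilityMeasure (Pν ν))
    (hiid : ∀ ν, 1 ≤ ν → iIndepFun (fun i (ω : ℕ → ℝ) => ω i) (Pν ν))
    (hmarg : ∀ ν, 1 ≤ ν → ∀ i, (Pν ν).map (fun ω : ℕ → ℝ => ω i)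
      = volume.withDensity (fun x => ENNReal.ofReal (if i < ν then f0 x else f1 x)))
    (T ν d : ℕ) (hν : 1 ≤ ν) (hd : 1 ≤ d) (hT : ν + d ≤ T)
    (θ : ℝ) (hθ : θ ∈ Set.Ioo (0 : ℝ) 1)
    (r : ℝ) (hr : 1 < r) (δF : ℝ) (hδF : δF ∈ Set.Ioo (0 : ℝ) 1) :
    Pν ν {ω | ((ν + d : ℕ) : ℕ∞) ≤ tau f0 f1 r δF ω}
      ≤ ENNReal.ofReal
          ((zeta r * ((ν : ℝ) + d) ^ r / δF) ^ θ * Real.exp (d * Lam f0 f1 θ)) ∧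
    Pν ν {ω | ((ν + d : ℕ) : ℕ∞) ≤ tau f0 f1 r δF ω}
      ≤ ENNReal.ofReal
          ((zeta r * (T : ℝ) ^ r / δF) ^ θ * Real.exp (d * Lam f0 f1 θ)) := by
  obtain ⟨hθ0, hθ1⟩ := hθ
  obtain ⟨hδ0, hδ1⟩ := hδF
  haveI := hprob ν
  set μ := Pν ν with hμ
  -- densities are integrable
  have hint0 : Integrable f0 := by
    by_contra h; rw [integral_undef h] at hf0_int; norm_num at hf0_int
  have hint1 : Integrable f1 := by
    by_contra h; rw [integral_undef h] at hf1_int; norm_num at hf1_int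
  set I : ℝ := ∫ x, f0 x ^ θ * f1 x ^ (1 - θ) with hI
  have h_pos : ∀ x, 0 < f0 x ^ θ * f1 x ^ (1 - θ) := fun x =>
    mul_pos (Real.rpow_pos_of_pos (hf0_pos x) _) (Real.rpow_pos_of_pos (hf1_pos x) _)
  have h_meas : Measurable (fun x => f0 x ^ θ * f1 x ^ (1 - θ)) := by measurability
  have h_int : Integrable (fun x => f0 x ^ θ * f1 x ^ (1 - θ)) := by
    refine Integrable.mono' ((hint0.const_mul θ).add (hint1.const_mul (1 - θ)))
      h_meas.aestronglyMeasurable ?_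
    filter_upwards with x
    rw [Real.norm_eq_abs, abs_of_nonneg (h_pos x).le]
    exact Real.geom_mean_le_arith_mean2_weighted hθ0.le (by linarith) (hf0_pos x).le
      (hf1_pos x).le (by ring)
  have hI_pos : 0 < I := by
    rw [hI, integral_pos_iff_support_of_nonneg (fun x => (h_pos x).le) h_int]
    have hsupp : Function.support (fun x => f0 x ^ θ * f1 x ^ (1 - θ)) = Set.univ :=
      Set.eq_univ_of_forall fun x => (h_pos x).ne'
    rw [hsupp]
    simp [Real.volume_univ]
  have hexpLam : Real.exp (Lam f0 f1 θ) = I := Real.exp_log hI_pos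
  -- the log-likelihood ratio family
  set Y : ℕ → (ℕ → ℝ) → ℝ := fun i ω => Real.log (f1 (ω i) / f0 (ω i)) with hYdef
  have hYmeas : ∀ i, Measurable (Y i) := fun i =>
    ((hf1_meas.comp (measurable_pi_apply i)).div (hf0_meas.comp (measurable_pi_apply i))).log
  have hYindep : iIndepFun Y μ :=
    (hiid ν hν).comp (fun _ x => Real.log (f1 x / f0 x)) (fun _ => (hf1_meas.div hf0_meas).log)
  set n := ν + d - 1 with hn
  have hνn : ν ≤ n := by omega
  have hn1 : 1 ≤ n := le_trans hν hνn
  set s := Finset.Icc ν n with hs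
  have hcard : s.card = d := by rw [hs, Nat.card_Icc]; omega
  -- pointwise identity
  have hkey : ∀ x : ℝ, ((f1 x).toNNReal : ℝ) * Real.exp (-θ * Real.log (f1 x / f0 x))
      = f0 x ^ θ * f1 x ^ (1 - θ) := by
    intro x
    have h0 := hf0_pos x
    have h1 := hf1_pos x
    rw [Real.coe_toNNReal _ h1.le]
    have hexp : Real.exp (-θ * Real.log (f1 x / f0 x)) = (f0 x / f1 x) ^ θ := by
      rw [Real.rpow_def_of_pos (div_pos h0 h1), Real.log_div h0.ne' h1.ne',
        Real.log_div h1.ne' h0.ne']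
      congr 1; ring
    rw [hexp, Real.div_rpow h0.le h1.le, Real.rpow_sub h1, Real.rpow_one]
    ring
  have hphimeas : Measurable (fun x : ℝ => Real.exp (-θ * Real.log (f1 x / f0 x))) :=
    (((hf1_meas.div hf0_meas).log).const_mul (-θ)).exp
  have hnnmeas : Measurable (fun x : ℝ => (f1 x).toNNReal) :=
    measurable_real_toNNReal.comp hf1_meas
  -- the marginal of each coordinate in s
  have hmap : ∀ i ∈ s, Measure.map (fun ω : ℕ → ℝ => ω i) μ
      = volume.withDensity (fun x => ((f1 x).toNNReal : ℝ≥0∞)) := by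
    intro i hi
    have hνi : ν ≤ i := (Finset.mem_Icc.mp hi).1
    rw [hμ, hmarg ν hν i]
    congr 1
    funext x
    rw [if_neg (by omega)]
    rfl
  -- integrability and value of each mgf
  have hint_exp : ∀ i ∈ s, Integrable (fun ω => Real.exp (-θ * Y i ω)) μ := by
    intro i hi
    have h1 : Integrable (fun x => Real.exp (-θ * Real.log (f1 x / f0 x)))
        (Measure.map (fun ω : ℕ → ℝ => ω i) μ) := by
      rw [hmap i hi, integrable_withDensity_iff_integrable_smul hnnmeas]
      refine h_int.congr ?_
      filter_upwards with x
      show f0 x ^ θ * f1 x ^ (1 - θ) = (f1 x).toNNReal • Real.exp (-θ * Real.log (f1 x / f0 x))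
      rw [NNReal.smul_def, smul_eq_mul, hkey x]
    exact (integrable_map_measure hphimeas.aestronglyMeasurable
      (measurable_pi_apply i).aemeasurable).mp h1
  have hmgf : ∀ i ∈ s, mgf (Y i) μ (-θ) = I := by
    intro i hi
    have h2 := integral_map (μ := μ) (φ := fun ω : ℕ → ℝ => ω i)
      (measurable_pi_apply i).aemeasurable hphimeas.aestronglyMeasurable
    simp only [mgf]
    show ∫ ω, Real.exp (-θ * Real.log (f1 (ω i) / f0 (ω i))) ∂μ = I
    rw [← h2, hmap i hi, integral_withDensity_eq_integral_smul hnnmeas]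
    rw [hI]
    refine integral_congr_ae (Filter.Eventually.of_forall fun x => ?_)
    show (f1 x).toNNReal • Real.exp (-θ * Real.log (f1 x / f0 x)) = f0 x ^ θ * f1 x ^ (1 - θ)
    rw [NNReal.smul_def, smul_eq_mul, hkey x]
  -- the sum and its mgf
  set S : (ℕ → ℝ) → ℝ := ∑ i ∈ s, Y i with hS
  have hmgfS : mgf S μ (-θ) = I ^ d := by
    rw [hS, hYindep.mgf_sum hYmeas s, Finset.prod_congr rfl hmgf, Finset.prod_const, hcard]
  have hintS : Integrable (fun ω => Real.exp (-θ * S ω)) μ := by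
    have := hYindep.integrable_exp_mul_sum (t := -θ) hYmeas hint_exp
    exact this
  -- Chernoff bound
  set ε := beta r δF n with hε
  have hcher := measure_le_le_exp_mul_mgf (μ := μ) (X := S) (t := -θ) ε (by linarith) hintS
  rw [neg_neg, hmgfS] at hcher
  -- event inclusion
  have hsub : {ω | ((ν + d : ℕ) : ℕ∞) ≤ tau f0 f1 r δF ω} ⊆ {ω | S ω ≤ ε} := by
    intro ω hω
    simp only [Set.mem_setOf_eq] at hω ⊢
    by_contra hcon
    push_neg at hcon
    have hSW : S ω = ∑ i ∈ Finset.Icc ν n, llr f0 f1 ω i := by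
      rw [hS, Finset.sum_apply]; rfl
    have hle2 : S ω ≤ cusum (llr f0 f1 ω) n := by
      rw [hSW]
      show _ ≤ ⨆ k : {k : ℕ // k ∈ Finset.Icc 1 n}, ∑ i ∈ Finset.Icc (k : ℕ) n, llr f0 f1 ω i
      haveI : Fintype {k : ℕ // k ∈ Finset.Icc 1 n} := FinsetCoe.fintype _
      exact le_ciSup
        (f := fun k : {k : ℕ // k ∈ Finset.Icc 1 n} => ∑ i ∈ Finset.Icc (k : ℕ) n, llr f0 f1 ω i)
        (Finite.bddAbove_range _) ⟨ν, Finset.mem_Icc.mpr ⟨hν, hνn⟩⟩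
    have hWn : beta r δF n ≤ cusum (llr f0 f1 ω) n := le_trans hcon.le hle2
    have htau : tau f0 f1 r δF ω ≤ (n : ℕ∞) := sInf_le ⟨n, rfl, hn1, hWn⟩
    have hle := le_trans hω htau
    rw [Nat.cast_le] at hle
    omega
  -- assemble
  have hmain : μ {ω | ((ν + d : ℕ) : ℕ∞) ≤ tau f0 f1 r δF ω}
      ≤ ENNReal.ofReal (Real.exp (θ * ε) * I ^ d) := by
    calc μ {ω | ((ν + d : ℕ) : ℕ∞) ≤ tau f0 f1 r δF ω} ≤ μ {ω | S ω ≤ ε} := measure_mono hsub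
    _ = ENNReal.ofReal ((μ {ω | S ω ≤ ε}).toReal) := (ENNReal.ofReal_toReal (measure_ne_top _ _)).symm
    _ ≤ ENNReal.ofReal (Real.exp (θ * ε) * I ^ d) := ENNReal.ofReal_le_ofReal hcher
  have hId : I ^ d = Real.exp (↑d * Lam f0 f1 θ) := by
    rw [Real.exp_nat_mul, hexpLam]
  have hζ := zeta_pos hr
  have hnpos : (0:ℝ) < (n : ℝ) := by exact_mod_cast hn1
  have hArg_pos : 0 < zeta r * (n : ℝ) ^ r / δF := by positivity
  have hexpε : Real.exp (θ * ε) = (zeta r * (n : ℝ) ^ r / δF) ^ θ := by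
    rw [hε, _root_.beta, Real.rpow_def_of_pos hArg_pos]
    congr 1; ring
  -- monotonicity in the argument of the power
  have hmono : ∀ m : ℕ, n ≤ m →
      (zeta r * (n : ℝ) ^ r / δF) ^ θ ≤ (zeta r * (m : ℝ) ^ r / δF) ^ θ := by
    intro m hm
    refine Real.rpow_le_rpow hArg_pos.le ?_ hθ0.le
    have : (n : ℝ) ^ r ≤ (m : ℝ) ^ r :=
      Real.rpow_le_rpow hnpos.le (by exact_mod_cast hm) (by linarith)
    have hz : 0 ≤ zeta r := hζ.le
    gcongr
  have hbound : ∀ m : ℕ, n ≤ m → μ {ω | ((ν + d : ℕ) : ℕ∞) ≤ tau f0 f1 r δF ω}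
      ≤ ENNReal.ofReal ((zeta r * (m : ℝ) ^ r / δF) ^ θ * Real.exp (↑d * Lam f0 f1 θ)) := by
    intro m hm
    refine le_trans hmain (ENNReal.ofReal_le_ofReal ?_)
    rw [hexpε, hId]
    exact mul_le_mul_of_nonneg_right (hmono m hm) (Real.exp_nonneg _)
  constructor
  · have := hbound (ν + d) (by omega)
    convert this using 4
    push_cast
    ring
  · exact hbound T (by omega)

end
end

section
/- Fix T ∈ ℕ, δ_F, δ_D ∈ (0,1), r > 1 and θ ∈ (0,1), and set d̃ := (1/|Λ(θ)|) [ log(1/δ_D) + θ log(1/δ_F) + rθ log T + θ log ζ(r) ]. Then for every ν ∈ ℕ and every integer d ≥ d̃ with ν + d ≤ T, the TVT-CuSum stopping time satisfies P_ν(τ_r ≥ ν + d) ≤ δ_D. -/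
open MeasureTheory ProbabilityTheory
open scoped ENNReal

noncomputable section

lemma amgm_strict {a b θ : ℝ} (ha : 0 < a) (hb : 0 < b) (hθ0 : 0 < θ) (hθ1 : θ < 1)
    (hab : a ≠ b) : a ^ θ * b ^ (1 - θ) < θ * a + (1 - θ) * b := by
  have h1θ : (0:ℝ) < 1 - θ := by linarith
  have hcc := strictConcaveOn_log_Ioi.2 (Set.mem_Ioi.2 ha) (Set.mem_Ioi.2 hb) hab hθ0 h1θ
    (by ring)
  simp only [smul_eq_mul] at hcc
  have hexp : a ^ θ * b ^ (1 - θ) = Real.exp (θ * Real.log a + (1 - θ) * Real.log b) := by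
    rw [Real.rpow_def_of_pos ha, Real.rpow_def_of_pos hb, ← Real.exp_add]
    ring_nf
  rw [hexp]
  calc Real.exp (θ * Real.log a + (1 - θ) * Real.log b)
      < Real.exp (Real.log (θ * a + (1 - θ) * b)) := Real.exp_lt_exp.2 hcc
    _ = θ * a + (1 - θ) * b := Real.exp_log (by positivity)

lemma amgm_le {a b θ : ℝ} (ha : 0 < a) (hb : 0 < b) (hθ0 : 0 < θ) (hθ1 : θ < 1) :
    a ^ θ * b ^ (1 - θ) ≤ θ * a + (1 - θ) * b := by
  rcases eq_or_ne a b with rfl | hab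
  · rw [← Real.rpow_add ha]
    norm_num
    linarith [Real.rpow_one a]
  · exact (amgm_strict ha hb hθ0 hθ1 hab).le

lemma lintegral_finset_prod_iIndep {Ω : Type*} {mΩ : MeasurableSpace Ω} {μ : Measure Ω}
    [IsProbabilityMeasure μ] (g : ℕ → Ω → ℝ≥0∞)
    (hindep : iIndepFun g μ) (hmeas : ∀ i, Measurable (g i))
    (s : Finset ℕ) :
    ∫⁻ ω, ∏ i ∈ s, g i ω ∂μ = ∏ i ∈ s, ∫⁻ ω, g i ω ∂μ := by
  classical
  induction s using Finset.induction_on with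
  | empty => simp
  | @insert a s ha ih =>
    have hprod : Measurable (∏ i ∈ s, g i) := by
      rw [show (∏ i ∈ s, g i) = fun ω => ∏ i ∈ s, g i ω from funext fun ω =>
        Finset.prod_apply ω s g]
      exact Finset.measurable_prod s fun i _ => hmeas i
    have hind2 : IndepFun (g a) (∏ i ∈ s, g i) μ :=
      (ProbabilityTheory.iIndepFun.indepFun_finsetProd_of_notMem hindep hmeas ha).symm
    calc ∫⁻ ω, ∏ i ∈ insert a s, g i ω ∂μ
        = ∫⁻ ω, (g a * ∏ i ∈ s, g i) ω ∂μ := by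
          simp [Finset.prod_insert ha, Finset.prod_apply]
      _ = (∫⁻ ω, g a ω ∂μ) * ∫⁻ ω, (∏ i ∈ s, g i) ω ∂μ :=
          lintegral_mul_eq_lintegral_mul_lintegral_of_indepFun (hmeas a) hprod hind2
      _ = ∏ i ∈ insert a s, ∫⁻ ω, g i ω ∂μ := by
          simp [Finset.prod_insert ha, Finset.prod_apply, ih]


set_option maxHeartbeats 1000000 in
/-- **Sufficiency of the latency `d̃`.**  Fix `T ∈ ℕ`, `δF, δD ∈ (0,1)`, `r > 1`, `θ ∈ (0,1)`,
and set `d̃ = (1/|Λ(θ)|)[log(1/δD) + θ log(1/δF) + rθ log T + θ log ζ(r)]`.  Then for every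
`ν ≥ 1` and every integer `d ≥ d̃` with `ν + d ≤ T`, `P_ν(τ_r ≥ ν + d) ≤ δD`. -/
theorem tvt_cusum_latency_sufficient
    (f0 f1 : ℝ → ℝ)
    (hf0_pos : ∀ x, 0 < f0 x) (hf1_pos : ∀ x, 0 < f1 x)
    (hf0_meas : Measurable f0) (hf1_meas : Measurable f1)
    (hf0_int : ∫ x, f0 x = 1) (hf1_int : ∫ x, f1 x = 1)
    (hne : volume {x | f0 x ≠ f1 x} ≠ 0)
    (Pν : ℕ → Measure (ℕ → ℝ)) (hprob : ∀ ν, IsProbabilityMeasure (Pν ν))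
    (hiid : ∀ ν, 1 ≤ ν → iIndepFun (fun i (ω : ℕ → ℝ) => ω i) (Pν ν))
    (hmarg : ∀ ν, 1 ≤ ν → ∀ i, (Pν ν).map (fun ω : ℕ → ℝ => ω i)
      = volume.withDensity (fun x => ENNReal.ofReal (if i < ν then f0 x else f1 x)))
    (T : ℕ) (δF δD : ℝ) (hδF : δF ∈ Set.Ioo (0 : ℝ) 1) (hδD : δD ∈ Set.Ioo (0 : ℝ) 1)
    (r : ℝ) (hr : 1 < r) (θ : ℝ) (hθ : θ ∈ Set.Ioo (0 : ℝ) 1) :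
    ∀ ν : ℕ, 1 ≤ ν → ∀ d : ℕ,
      (1 / |Lam f0 f1 θ|) *
          (Real.log (1 / δD) + θ * Real.log (1 / δF)
            + r * θ * Real.log T + θ * Real.log (zeta r)) ≤ (d : ℝ) →
      ν + d ≤ T →
      Pν ν {ω | ((ν + d : ℕ) : ℕ∞) ≤ tau f0 f1 r δF ω} ≤ ENNReal.ofReal δD := by
  intro ν hν d hd hT
  obtain ⟨hδF0, hδF1⟩ := hδF
  obtain ⟨hδD0, hδD1⟩ := hδD
  obtain ⟨hθ0, hθ1⟩ := hθ
  haveI := hprob ν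
  -- integrability of the densities
  have hint0 : Integrable f0 := by
    by_contra hc; rw [integral_undef hc] at hf0_int; norm_num at hf0_int
  have hint1 : Integrable f1 := by
    by_contra hc; rw [integral_undef hc] at hf1_int; norm_num at hf1_int
  set h : ℝ → ℝ := fun x => f0 x ^ θ * f1 x ^ (1 - θ) with hh_def
  have hh_pos : ∀ x, 0 < h x := fun x =>
    mul_pos (Real.rpow_pos_of_pos (hf0_pos x) _) (Real.rpow_pos_of_pos (hf1_pos x) _)
  have hh_le : ∀ x, h x ≤ θ * f0 x + (1 - θ) * f1 x := fun x =>
    amgm_le (hf0_pos x) (hf1_pos x) hθ0 hθ1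
  have hh_meas : Measurable h := (hf0_meas.pow_const θ).mul (hf1_meas.pow_const (1 - θ))
  have hg_int : Integrable (fun x => θ * f0 x + (1 - θ) * f1 x) :=
    (hint0.const_mul θ).add (hint1.const_mul (1 - θ))
  have hh_int : Integrable h := by
    refine hg_int.mono' hh_meas.aestronglyMeasurable (ae_of_all _ fun x => ?_)
    rw [Real.norm_eq_abs, abs_of_pos (hh_pos x)]; exact hh_le x
  set I := ∫ x : ℝ, f0 x ^ θ * f1 x ^ (1 - θ) with hI_def
  have hI_eq : I = ∫ x, h x := rfl
  have hI_pos : 0 < I := by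
    rw [hI_eq]
    refine (integral_pos_iff_support_of_nonneg (fun x => (hh_pos x).le) hh_int).2 ?_
    have hs : Function.support h = Set.univ := Set.eq_univ_of_forall fun x => (hh_pos x).ne'
    rw [hs]
    simp
  have hI_lt1 : I < 1 := by
    have hsub_int : Integrable (fun x => (θ * f0 x + (1 - θ) * f1 x) - h x) := hg_int.sub hh_int
    have hpos : 0 < ∫ x, ((θ * f0 x + (1 - θ) * f1 x) - h x) := by
      refine (integral_pos_iff_support_of_nonneg
        (fun x => sub_nonneg.2 (hh_le x)) hsub_int).2 ?_
      refine lt_of_lt_of_le (pos_iff_ne_zero.2 hne) (measure_mono ?_)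
      intro x hx
      have hlt : h x < θ * f0 x + (1 - θ) * f1 x :=
        amgm_strict (hf0_pos x) (hf1_pos x) hθ0 hθ1 hx
      exact sub_ne_zero.2 (ne_of_gt hlt)
    rw [integral_sub hg_int hh_int, integral_add (hint0.const_mul θ) (hint1.const_mul (1 - θ)),
      integral_const_mul, integral_const_mul, hf0_int, hf1_int] at hpos
    rw [hI_eq]; linarith
  have hLam_eq : Lam f0 f1 θ = Real.log I := rfl
  have hLam_neg : Lam f0 f1 θ < 0 := by rw [hLam_eq]; exact Real.log_neg hI_pos hI_lt1
  have habs : |Lam f0 f1 θ| = -Lam f0 f1 θ := abs_of_neg hLam_neg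
  -- zeta facts
  have hsum : Summable (fun n : ℕ => ((n : ℝ) + 1) ^ (-r)) := by
    have h1 : Summable (fun n : ℕ => (n : ℝ) ^ (-r)) :=
      Real.summable_nat_rpow.2 (by linarith)
    have h2 := (summable_nat_add_iff 1).2 h1
    simpa using h2
  have hζ1 : 1 ≤ zeta r := by
    have h0 := Summable.le_tsum hsum 0 (fun j _ => Real.rpow_nonneg (by positivity) _)
    simpa [zeta] using h0
  have hζ0 : 0 < zeta r := lt_of_lt_of_le one_pos hζ1
  -- positivity of the numerator
  have hT1 : 1 ≤ T := le_trans (by omega) hT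
  have hlogT : 0 ≤ Real.log T := Real.log_nonneg (by exact_mod_cast hT1)
  have hnum_pos : 0 < Real.log (1 / δD) + θ * Real.log (1 / δF)
      + r * θ * Real.log T + θ * Real.log (zeta r) := by
    have h1 : 0 < Real.log (1 / δD) := Real.log_pos (one_lt_one_div hδD0 hδD1)
    have h2 : 0 < Real.log (1 / δF) := Real.log_pos (one_lt_one_div hδF0 hδF1)
    have h3 : 0 ≤ Real.log (zeta r) := Real.log_nonneg hζ1
    have h4 : 0 ≤ r * θ * Real.log T := by positivity
    nlinarith
  have hd1 : 1 ≤ d := by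
    rcases Nat.eq_zero_or_pos d with rfl | hp
    · exfalso
      have hL : 0 < 1 / |Lam f0 f1 θ| := by rw [habs]; exact one_div_pos.2 (by linarith)
      have := mul_pos hL hnum_pos
      simp only [Nat.cast_zero] at hd
      linarith
    · exact hp
  set n := ν + d - 1 with hn_def
  have hn1 : 1 ≤ n := by omega
  have hnν : ν ≤ n := by omega
  have hnd : ν + d = n + 1 := by omega
  have hnT : n ≤ T := by omega
  have hn0 : (0 : ℝ) < (n : ℝ) := by exact_mod_cast hn1
  -- key numeric inequality
  have hβ : beta r δF n = Real.log (zeta r) + r * Real.log n - Real.log δF := by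
    rw [_root_.beta, Real.log_div (by positivity) (ne_of_gt hδF0),
      Real.log_mul (ne_of_gt hζ0) (by positivity), Real.log_rpow hn0]
  have hkey : θ * beta r δF n + (d : ℝ) * Lam f0 f1 θ ≤ Real.log δD := by
    have hLpos : 0 < -Lam f0 f1 θ := by linarith
    have hd' : Real.log (1 / δD) + θ * Real.log (1 / δF) + r * θ * Real.log T
        + θ * Real.log (zeta r) ≤ (d : ℝ) * (-Lam f0 f1 θ) := by
      rw [habs, one_div, inv_mul_le_iff₀ hLpos] at hd
      linarith [hd]
    have hlogn : Real.log n ≤ Real.log T := Real.log_le_log hn0 (by exact_mod_cast hnT)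
    have hlogδD : Real.log (1 / δD) = -Real.log δD := by
      rw [one_div, Real.log_inv]
    have hlogδF : Real.log (1 / δF) = -Real.log δF := by
      rw [one_div, Real.log_inv]
    rw [hlogδD, hlogδF] at hd'
    have hmono : θ * (r * Real.log n) ≤ θ * (r * Real.log T) := by
      have h' := mul_le_mul_of_nonneg_left hlogn (by positivity : (0:ℝ) ≤ θ * r)
      calc θ * (r * Real.log n) = θ * r * Real.log n := by ring
        _ ≤ θ * r * Real.log T := h'
        _ = θ * (r * Real.log T) := by ring
    rw [hβ]
    ring_nf
    ring_nf at hd' hmono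
    linarith
  -- the Chernoff argument
  set S : (ℕ → ℝ) → ℝ := fun ω => ∑ i ∈ Finset.Icc ν n, llr f0 f1 ω i with hS_def
  set C : Set (ℕ → ℝ) := {ω | S ω < beta r δF n} with hC_def
  have hsubset : {ω | ((ν + d : ℕ) : ℕ∞) ≤ tau f0 f1 r δF ω} ⊆ C := by
    intro ω hω
    by_contra hc
    have hc' : beta r δF n ≤ S ω := le_of_not_gt hc
    have hScusum : S ω ≤ cusum (llr f0 f1 ω) n := by
      have hmem : ν ∈ Finset.Icc 1 n := Finset.mem_Icc.2 ⟨hν, hnν⟩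
      unfold cusum
      haveI : Fintype {k : ℕ // k ∈ Finset.Icc 1 n} := FinsetCoe.fintype _
      exact le_ciSup (f := fun k : {k : ℕ // k ∈ Finset.Icc 1 n} =>
        ∑ i ∈ Finset.Icc (k : ℕ) n, llr f0 f1 ω i) (Finite.bddAbove_range _) ⟨ν, hmem⟩
    have hmemS : ((n : ℕ) : ℕ∞) ∈ {t : ℕ∞ | ∃ m : ℕ, t = (m : ℕ∞) ∧ 1 ≤ m ∧
        beta r δF m ≤ cusum (llr f0 f1 ω) m} := ⟨n, rfl, hn1, le_trans hc' hScusum⟩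
    have htau : tau f0 f1 r δF ω ≤ (n : ℕ∞) := sInf_le hmemS
    have hle : ((ν + d : ℕ) : ℕ∞) ≤ (n : ℕ∞) := le_trans hω htau
    rw [Nat.cast_le] at hle
    omega
  set G : ℝ → ℝ≥0∞ := fun x => ENNReal.ofReal ((f0 x / f1 x) ^ θ) with hG_def
  have hG_meas : Measurable G := ((hf0_meas.div hf1_meas).pow_const θ).ennreal_ofReal
  set g : ℕ → (ℕ → ℝ) → ℝ≥0∞ := fun i ω => G (ω i) with hg_def
  have hg_meas : ∀ i, Measurable (g i) := fun i => hG_meas.comp (measurable_pi_apply i)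
  have hg_indep : iIndepFun g (Pν ν) :=
    (hiid ν hν).comp (fun _ => G) (fun _ => hG_meas)
  have hprod_eq : ∀ ω : ℕ → ℝ, ∏ i ∈ Finset.Icc ν n, g i ω
      = ENNReal.ofReal (Real.exp (-θ * S ω)) := by
    intro ω
    rw [← ENNReal.ofReal_prod_of_nonneg
      (fun i _ => Real.rpow_nonneg (div_pos (hf0_pos _) (hf1_pos _)).le θ)]
    congr 1
    have hterm : ∀ i, (f0 (ω i) / f1 (ω i)) ^ θ = Real.exp (-θ * llr f0 f1 ω i) := by
      intro i
      rw [Real.rpow_def_of_pos (div_pos (hf0_pos _) (hf1_pos _))]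
      congr 1
      have : f0 (ω i) / f1 (ω i) = (f1 (ω i) / f0 (ω i))⁻¹ := by
        field_simp
      rw [this, Real.log_inv]
      simp only [_root_.llr]
      ring
    rw [Finset.prod_congr rfl (fun i _ => hterm i), ← Real.exp_sum]
    congr 1
    rw [hS_def, Finset.mul_sum]
  have hmarkov : ENNReal.ofReal (Real.exp (-θ * beta r δF n)) * Pν ν C
      ≤ ∫⁻ ω, ∏ i ∈ Finset.Icc ν n, g i ω ∂(Pν ν) := by
    calc ENNReal.ofReal (Real.exp (-θ * beta r δF n)) * Pν ν C
        = ∫⁻ _ in C, ENNReal.ofReal (Real.exp (-θ * beta r δF n)) ∂(Pν ν) :=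
          (setLIntegral_const _ _).symm
      _ ≤ ∫⁻ ω in C, ∏ i ∈ Finset.Icc ν n, g i ω ∂(Pν ν) := by
          refine setLIntegral_mono (Finset.measurable_prod _ fun i _ => hg_meas i) ?_
          intro ω hω
          rw [hprod_eq ω]
          refine ENNReal.ofReal_le_ofReal (Real.exp_le_exp.2 ?_)
          have hlt : S ω < beta r δF n := hω
          nlinarith
      _ ≤ ∫⁻ ω, ∏ i ∈ Finset.Icc ν n, g i ω ∂(Pν ν) := setLIntegral_le_lintegral _ _
  have hgint : ∀ i ∈ Finset.Icc ν n, ∫⁻ ω, g i ω ∂(Pν ν) = ENNReal.ofReal I := by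
    intro i hi
    have hiν : ¬ i < ν := by
      rw [Finset.mem_Icc] at hi; omega
    have hmap : (Pν ν).map (fun ω : ℕ → ℝ => ω i)
        = volume.withDensity (fun x => ENNReal.ofReal (f1 x)) := by
      rw [hmarg ν hν i]
      congr 1
      funext x
      rw [if_neg hiν]
    calc ∫⁻ ω, g i ω ∂(Pν ν)
        = ∫⁻ x, G x ∂((Pν ν).map (fun ω : ℕ → ℝ => ω i)) :=
          (lintegral_map hG_meas (measurable_pi_apply i)).symm
      _ = ∫⁻ x, ((fun x => ENNReal.ofReal (f1 x)) * G) x ∂volume := by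
          rw [hmap, lintegral_withDensity_eq_lintegral_mul volume
            hf1_meas.ennreal_ofReal hG_meas]
      _ = ∫⁻ x, ENNReal.ofReal (h x) ∂volume := by
          congr 1
          funext x
          simp only [Pi.mul_apply, hG_def]
          rw [← ENNReal.ofReal_mul (hf1_pos x).le]
          congr 1
          simp only [hh_def]
          rw [Real.div_rpow (hf0_pos x).le (hf1_pos x).le,
            Real.rpow_sub (hf1_pos x), Real.rpow_one]
          have hne' : f1 x ^ θ ≠ 0 := ne_of_gt (Real.rpow_pos_of_pos (hf1_pos x) θ)
          field_simp
      _ = ENNReal.ofReal I := by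
          rw [hI_eq]
          exact (ofReal_integral_eq_lintegral_ofReal hh_int
            (ae_of_all _ fun x => (hh_pos x).le)).symm
  have hfinal : ∫⁻ ω, ∏ i ∈ Finset.Icc ν n, g i ω ∂(Pν ν) = ENNReal.ofReal I ^ d := by
    rw [lintegral_finset_prod_iIndep g hg_indep hg_meas, Finset.prod_congr rfl hgint,
      Finset.prod_const]
    congr 1
    rw [Nat.card_Icc]
    omega
  have hIexp : ENNReal.ofReal I ^ d = ENNReal.ofReal (Real.exp ((d : ℝ) * Lam f0 f1 θ)) := by
    rw [← ENNReal.ofReal_pow hI_pos.le]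
    congr 1
    rw [show ((d : ℝ) * Lam f0 f1 θ) = ((d : ℕ) : ℝ) * Lam f0 f1 θ from rfl,
      Real.exp_nat_mul, hLam_eq, Real.exp_log hI_pos]
  have hchain : ENNReal.ofReal (Real.exp (-θ * beta r δF n)) * Pν ν C
      ≤ ENNReal.ofReal (Real.exp (-θ * beta r δF n))
        * ENNReal.ofReal (Real.exp (θ * beta r δF n + (d : ℝ) * Lam f0 f1 θ)) := by
    rw [← ENNReal.ofReal_mul (Real.exp_pos _).le, ← Real.exp_add,
      show -θ * beta r δF n + (θ * beta r δF n + (d : ℝ) * Lam f0 f1 θ)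
        = (d : ℝ) * Lam f0 f1 θ by ring]
    rw [← hIexp, ← hfinal]
    exact hmarkov
  have hC : Pν ν C ≤ ENNReal.ofReal (Real.exp (θ * beta r δF n + (d : ℝ) * Lam f0 f1 θ)) :=
    (ENNReal.mul_le_mul_iff_right (ne_of_gt (ENNReal.ofReal_pos.2 (Real.exp_pos _)))
      ENNReal.ofReal_ne_top).1 hchain
  calc Pν ν {ω | ((ν + d : ℕ) : ℕ∞) ≤ tau f0 f1 r δF ω}
      ≤ Pν ν C := measure_mono hsubset
    _ ≤ ENNReal.ofReal (Real.exp (θ * beta r δF n + (d : ℝ) * Lam f0 f1 θ)) := hC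
    _ ≤ ENNReal.ofReal δD := by
        refine ENNReal.ofReal_le_ofReal ?_
        calc Real.exp (θ * beta r δF n + (d : ℝ) * Lam f0 f1 θ)
            ≤ Real.exp (Real.log δD) := Real.exp_le_exp.2 hkey
          _ = δD := Real.exp_log hδD0

end
end

section
/- If f0 ≠ f1 on a set of positive Lebesgue measure, then Λ is strictly convex on the interval [0,1]: for all θ_1, θ_2 ∈ [0,1] with θ_1 ≠ θ_2 and all t ∈ (0,1), Λ(t θ_1 + (1−t) θ_2) < t Λ(θ_1) + (1−t) Λ(θ_2). -/
open MeasureTheory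
open scoped ENNReal NNReal

noncomputable section

lemma aux_lintegral_le_one (f0 f1 : ℝ → ℝ)
    (hf0_pos : ∀ x, 0 < f0 x) (hf1_pos : ∀ x, 0 < f1 x)
    (hf0_meas : Measurable f0) (hf1_meas : Measurable f1)
    (hf0_int : ∫ x, f0 x = 1) (hf1_int : ∫ x, f1 x = 1)
    {θ : ℝ} (hθ : θ ∈ Set.Icc (0:ℝ) 1) :
    ∫⁻ x, ENNReal.ofReal (f0 x ^ θ * f1 x ^ (1-θ)) ≤ 1 := by
  have hint0 : Integrable f0 := by
    by_contra h; rw [integral_undef h] at hf0_int; norm_num at hf0_int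
  have hint1 : Integrable f1 := by
    by_contra h; rw [integral_undef h] at hf1_int; norm_num at hf1_int
  have hl0 : ∫⁻ x, ENNReal.ofReal (f0 x) = 1 := by
    rw [← ofReal_integral_eq_lintegral_ofReal hint0 (ae_of_all _ fun x => (hf0_pos x).le),
      hf0_int, ENNReal.ofReal_one]
  have hl1 : ∫⁻ x, ENNReal.ofReal (f1 x) = 1 := by
    rw [← ofReal_integral_eq_lintegral_ofReal hint1 (ae_of_all _ fun x => (hf1_pos x).le),
      hf1_int, ENNReal.ofReal_one]
  rcases eq_or_lt_of_le hθ.1 with h0 | h0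
  · simp only [← h0, Real.rpow_zero, sub_zero, Real.rpow_one, one_mul]
    exact hl1.le
  rcases eq_or_lt_of_le hθ.2 with h1 | h1
  · simp only [h1, Real.rpow_one, sub_self, Real.rpow_zero, mul_one]
    exact hl0.le
  -- Hölder
  have hpq : Real.HolderConjugate (1/θ) (1/(1-θ)) := by
    rw [Real.holderConjugate_iff]
    constructor
    · rw [lt_div_iff₀ h0]; linarith
    · field_simp; ring
  have key := ENNReal.lintegral_mul_le_Lp_mul_Lq (volume)
    hpq (f := fun x => ENNReal.ofReal (f0 x) ^ θ) (g := fun x => ENNReal.ofReal (f1 x) ^ (1-θ))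
    ((hf0_meas.ennreal_ofReal.pow measurable_const).aemeasurable)
    ((hf1_meas.ennreal_ofReal.pow measurable_const).aemeasurable)
  have e0 : ∀ x:ℝ, (ENNReal.ofReal (f0 x) ^ θ) ^ (1/θ) = ENNReal.ofReal (f0 x) := fun x => by
    rw [← ENNReal.rpow_mul, mul_one_div_cancel h0.ne', ENNReal.rpow_one]
  have e1 : ∀ x:ℝ, (ENNReal.ofReal (f1 x) ^ (1-θ)) ^ (1/(1-θ)) = ENNReal.ofReal (f1 x) :=
    fun x => by
    rw [← ENNReal.rpow_mul, mul_one_div_cancel (by linarith : (1:ℝ)-θ ≠ 0), ENNReal.rpow_one]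
  simp only [Pi.mul_apply, e0, e1, hl0, hl1, ENNReal.one_rpow, one_mul] at key
  calc ∫⁻ x, ENNReal.ofReal (f0 x ^ θ * f1 x ^ (1-θ))
      = ∫⁻ x, (ENNReal.ofReal (f0 x)) ^ θ * (ENNReal.ofReal (f1 x)) ^ (1-θ) := by
        congr 1; funext x
        rw [ENNReal.ofReal_mul (Real.rpow_nonneg (hf0_pos x).le _),
          ENNReal.ofReal_rpow_of_pos (hf0_pos x), ENNReal.ofReal_rpow_of_pos (hf1_pos x)]
    _ ≤ 1 := key


lemma aux_integrable (f0 f1 : ℝ → ℝ)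
    (hf0_pos : ∀ x, 0 < f0 x) (hf1_pos : ∀ x, 0 < f1 x)
    (hf0_meas : Measurable f0) (hf1_meas : Measurable f1)
    (hf0_int : ∫ x, f0 x = 1) (hf1_int : ∫ x, f1 x = 1)
    {θ : ℝ} (hθ : θ ∈ Set.Icc (0:ℝ) 1) :
    Integrable (fun x => f0 x ^ θ * f1 x ^ (1-θ)) := by
  refine ⟨((hf0_meas.pow measurable_const).mul
    (hf1_meas.pow measurable_const)).aestronglyMeasurable, ?_⟩
  rw [hasFiniteIntegral_iff_ofReal (ae_of_all _ fun x => by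
    have := hf0_pos x; have := hf1_pos x; positivity)]
  exact lt_of_le_of_lt
    (aux_lintegral_le_one f0 f1 hf0_pos hf1_pos hf0_meas hf1_meas hf0_int hf1_int hθ)
    ENNReal.one_lt_top

lemma aux_integral_pos (f0 f1 : ℝ → ℝ)
    (hf0_pos : ∀ x, 0 < f0 x) (hf1_pos : ∀ x, 0 < f1 x)
    (hf0_meas : Measurable f0) (hf1_meas : Measurable f1)
    (hf0_int : ∫ x, f0 x = 1) (hf1_int : ∫ x, f1 x = 1)
    {θ : ℝ} (hθ : θ ∈ Set.Icc (0:ℝ) 1) :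
    0 < ∫ x, f0 x ^ θ * f1 x ^ (1-θ) := by
  rw [integral_pos_iff_support_of_nonneg (fun x => by
      have := hf0_pos x; have := hf1_pos x; positivity)
    (aux_integrable f0 f1 hf0_pos hf1_pos hf0_meas hf1_meas hf0_int hf1_int hθ)]
  have hs : Function.support (fun x => f0 x ^ θ * f1 x ^ (1-θ)) = Set.univ :=
    Set.eq_univ_of_forall fun x => Function.mem_support.mpr (ne_of_gt (by
      have := hf0_pos x; have := hf1_pos x; positivity))
  rw [hs]; simp


/-- **Strict convexity of `Λ` on `[0,1]`.**  If `f0 ≠ f1` on a set of positive Lebesgue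
measure, then `Λ` is strictly convex on `[0,1]`: for all `θ₁ ≠ θ₂` in `[0,1]` and all
`t ∈ (0,1)`, `Λ(t θ₁ + (1-t) θ₂) < t Λ(θ₁) + (1-t) Λ(θ₂)`. -/
theorem Lam_strictConvexOn
    (f0 f1 : ℝ → ℝ)
    (hf0_pos : ∀ x, 0 < f0 x) (hf1_pos : ∀ x, 0 < f1 x)
    (hf0_meas : Measurable f0) (hf1_meas : Measurable f1)
    (hf0_int : ∫ x, f0 x = 1) (hf1_int : ∫ x, f1 x = 1)
    (hne : volume {x | f0 x ≠ f1 x} ≠ 0) :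
    StrictConvexOn ℝ (Set.Icc (0 : ℝ) 1) (Lam f0 f1) := by
  refine ⟨convex_Icc 0 1, fun θ1 h1 θ2 h2 hne12 a b ha hb hab => ?_⟩
  have ha1 : a < 1 := by linarith
  set d : ℝ := θ1 - θ2 with hd
  have hdne : d ≠ 0 := sub_ne_zero.mpr hne12
  set w : ℝ → ℝ := fun x => f0 x ^ θ2 * f1 x ^ (1-θ2) with hwdef
  have hwpos : ∀ x, 0 < w x := fun x => by
    have := hf0_pos x; have := hf1_pos x; positivity
  have hw_meas : Measurable w := (hf0_meas.pow measurable_const).mul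
    (hf1_meas.pow measurable_const)
  set wn : ℝ → ℝ≥0 := fun x => Real.toNNReal (w x) with hwndef
  have hwn_meas : Measurable wn := hw_meas.real_toNNReal
  have hwn_coe : ∀ x, (wn x : ℝ) = w x := fun x => Real.coe_toNNReal _ (hwpos x).le
  set ν : Measure ℝ := volume.withDensity (fun x => (wn x : ℝ≥0∞)) with hν
  set h : ℝ → ℝ := fun x => (f0 x / f1 x) ^ d with hhdef
  have hh_meas : Measurable h := (hf0_meas.div hf1_meas).pow measurable_const
  have hh_nonneg : ∀ x, 0 ≤ h x := fun x =>
    Real.rpow_nonneg (div_nonneg (hf0_pos x).le (hf1_pos x).le) _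
  -- key pointwise identity
  have idgen : ∀ (c : ℝ) (x : ℝ), w x * (f0 x / f1 x) ^ c
      = f0 x ^ (θ2 + c) * f1 x ^ (1 - (θ2 + c)) := by
    intro c x
    have h0 := hf0_pos x; have h1' := hf1_pos x
    calc w x * (f0 x / f1 x) ^ c
        = (f0 x ^ θ2 * f0 x ^ c) * (f1 x ^ (1-θ2) / f1 x ^ c) := by
          rw [Real.div_rpow h0.le h1'.le]; simp only [hwdef]; ring
      _ = f0 x ^ (θ2+c) * f1 x ^ (1-θ2-c) := by
          rw [← Real.rpow_add h0, ← Real.rpow_sub h1']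
      _ = f0 x ^ (θ2+c) * f1 x ^ (1-(θ2+c)) := by ring_nf
  have hθmem : a * θ1 + b * θ2 ∈ Set.Icc (0:ℝ) 1 :=
    (convex_Icc (0:ℝ) 1) h1 h2 ha.le hb.le hab
  set A : ℝ := ∫ x, f0 x ^ θ1 * f1 x ^ (1-θ1) with hA
  set B : ℝ := ∫ x, f0 x ^ θ2 * f1 x ^ (1-θ2) with hB
  set C : ℝ := ∫ x, f0 x ^ (a*θ1+b*θ2) * f1 x ^ (1-(a*θ1+b*θ2)) with hC
  have hApos : 0 < A := aux_integral_pos f0 f1 hf0_pos hf1_pos hf0_meas hf1_meas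
    hf0_int hf1_int h1
  have hBpos : 0 < B := aux_integral_pos f0 f1 hf0_pos hf1_pos hf0_meas hf1_meas
    hf0_int hf1_int h2
  have hCpos : 0 < C := aux_integral_pos f0 f1 hf0_pos hf1_pos hf0_meas hf1_meas
    hf0_int hf1_int hθmem
  have hw_int : Integrable w := aux_integrable f0 f1 hf0_pos hf1_pos hf0_meas hf1_meas
    hf0_int hf1_int h2
  -- identity instances
  have id1 : ∀ x, w x * h x = f0 x ^ θ1 * f1 x ^ (1-θ1) := fun x => by
    have := idgen d x
    simpa [hd] using this
  have id2 : ∀ x, w x * h x ^ a = f0 x ^ (a*θ1+b*θ2) * f1 x ^ (1-(a*θ1+b*θ2)) := fun x => by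
    have hb' : b = 1 - a := by linarith
    have e : h x ^ a = (f0 x / f1 x) ^ (d * a) := by
      rw [hhdef, Real.rpow_mul (div_nonneg (hf0_pos x).le (hf1_pos x).le)]
    have e2 : θ2 + d * a = a*θ1+b*θ2 := by rw [hd, hb']; ring
    rw [e, idgen (d*a) x, e2]
  -- measure ν
  have hν_univ : ν Set.univ = ENNReal.ofReal B := by
    rw [hν, withDensity_apply _ MeasurableSet.univ, Measure.restrict_univ]
    have : ∀ x, ((wn x : ℝ≥0) : ℝ≥0∞) = ENNReal.ofReal (w x) := fun x => rfl
    simp_rw [this]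
    rw [← ofReal_integral_eq_lintegral_ofReal hw_int (ae_of_all _ fun x => (hwpos x).le)]
  haveI : IsFiniteMeasure ν := ⟨by rw [hν_univ]; exact ENNReal.ofReal_lt_top⟩
  have hν_toReal : (ν Set.univ).toReal = B := by
    rw [hν_univ, ENNReal.toReal_ofReal hBpos.le]
  -- integrability wrt ν
  have ih : Integrable h ν := by
    rw [hν, integrable_withDensity_iff_integrable_smul hwn_meas]
    have : (fun x => wn x • h x) = fun x => f0 x ^ θ1 * f1 x ^ (1-θ1) := by
      funext x; rw [NNReal.smul_def, smul_eq_mul, hwn_coe, id1]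
    rw [this]
    exact aux_integrable f0 f1 hf0_pos hf1_pos hf0_meas hf1_meas hf0_int hf1_int h1
  have ihp : Integrable (fun x => h x ^ a) ν := by
    rw [hν, integrable_withDensity_iff_integrable_smul hwn_meas]
    have : (fun x => wn x • h x ^ a)
        = fun x => f0 x ^ (a*θ1+b*θ2) * f1 x ^ (1-(a*θ1+b*θ2)) := by
      funext x; rw [NNReal.smul_def, smul_eq_mul, hwn_coe, id2]
    rw [this]
    exact aux_integrable f0 f1 hf0_pos hf1_pos hf0_meas hf1_meas hf0_int hf1_int hθmem
  -- integrals wrt ν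
  have iA : ∫ x, h x ∂ν = A := by
    rw [hν, integral_withDensity_eq_integral_smul hwn_meas, hA]
    congr 1; funext x; rw [NNReal.smul_def, smul_eq_mul, hwn_coe, id1]
  have iC : ∫ x, h x ^ a ∂ν = C := by
    rw [hν, integral_withDensity_eq_integral_smul hwn_meas, hC]
    congr 1; funext x; rw [NNReal.smul_def, smul_eq_mul, hwn_coe, id2]
  -- Jensen
  have jensen := StrictConcaveOn.ae_eq_const_or_lt_map_average (μ := ν)
    (Real.strictConcaveOn_rpow ha ha1)
    (fun x _ => (Real.continuousAt_rpow_const x a (Or.inr ha.le)).continuousWithinAt)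
    isClosed_Ici (ae_of_all _ fun x => Set.mem_Ici.mpr (hh_nonneg x)) ih ihp
  have havg : ⨍ x, h x ∂ν = B⁻¹ * A := by
    rw [average_eq, measureReal_def, hν_toReal, iA, smul_eq_mul]
  rcases jensen with hconst | hlt
  · -- h is a.e. constant: contradiction with hne
    exfalso
    set c : ℝ := ⨍ x, h x ∂ν with hc
    have hcpos : 0 < c := by rw [havg]; positivity
    have hvol : ∀ᵐ x ∂(volume : Measure ℝ), h x = c := by
      have := (ae_withDensity_iff (p := fun x => h x = c)
        hwn_meas.coe_nnreal_ennreal).mp hconst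
      filter_upwards [this] with x hx
      exact hx (by
        simp only [ne_eq, ENNReal.coe_eq_zero]
        exact fun hz => absurd (hwn_coe x ▸ congrArg NNReal.toReal hz)
          (by simpa using (hwpos x).ne'))
    have key : ∀ᵐ x ∂(volume : Measure ℝ), f0 x = c ^ (1/d) * f1 x := by
      filter_upwards [hvol] with x hx
      have h1' := hf1_pos x
      have : f0 x / f1 x = c ^ (1/d) := by
        have e : ((f0 x / f1 x) ^ d) ^ (1/d) = f0 x / f1 x := by
          rw [← Real.rpow_mul (div_nonneg (hf0_pos x).le (hf1_pos x).le),
            mul_one_div_cancel hdne, Real.rpow_one]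
        simp only [hhdef] at hx
        rw [← e, hx]
      rw [← this]; field_simp
    have hck : c ^ (1/d) = 1 := by
      have h' : ∫ x, f0 x = ∫ x, c^(1/d) * f1 x := integral_congr_ae key
      rw [integral_const_mul, hf0_int, hf1_int, mul_one] at h'
      exact h'.symm
    have : f0 =ᵐ[volume] f1 := by
      filter_upwards [key] with x hx; rw [hx, hck, one_mul]
    exact hne (ae_iff.mp this)
  · -- strict inequality
    have hlt' : B⁻¹ * C < (B⁻¹ * A) ^ a := by
      rw [← havg]
      have : ⨍ x, h x ^ a ∂ν = B⁻¹ * C := by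
        rw [average_eq, measureReal_def, hν_toReal, iC, smul_eq_mul]
      rw [← this]
      exact hlt
    have hlog : Real.log (B⁻¹ * C) < Real.log ((B⁻¹ * A) ^ a) :=
      Real.log_lt_log (by positivity) hlt'
    rw [Real.log_mul (by positivity) hCpos.ne', Real.log_inv,
      Real.log_rpow (by positivity),
      Real.log_mul (by positivity) hApos.ne', Real.log_inv] at hlog
    simp only [Lam, smul_eq_mul, ← hA, ← hB, ← hC]
    have hb' : b = 1 - a := by linarith
    rw [hb']
    linarith

end
end

section
/- Fix δ_F, δ_D ∈ (0,1), r > 1 and any θ ∈ (0,1). Then there exist constants C_1, C_2 ≥ 0 (depending only on f0, f1, r, θ, δ_F, δ_D) such that the high-probability latency of the TVT-CuSum test satisfies d_r(T, δ_F, δ_D) ≤ C_1 + C_2 log T for all T ∈ ℕ; in particular d_r(T, δ_F, δ_D) = O(log T) as T → ∞. -/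
open MeasureTheory ProbabilityTheory
open scoped ENNReal

noncomputable section

/-- High-probability latency
`d_r(T, δF, δD) = inf {d ∈ ℕ : P_ν(τ_r ≥ ν + d) ≤ δD for all ν ∈ {1, …, T - d}}`. -/
def hpLatency (f0 f1 : ℝ → ℝ) (Pν : ℕ → Measure (ℕ → ℝ)) (r : ℝ) (T : ℕ) (δF δD : ℝ) : ℕ :=
  sInf {d : ℕ | ∀ ν : ℕ, 1 ≤ ν → ν + d ≤ T →
    Pν ν {ω | ((ν + d : ℕ) : ℕ∞) ≤ tau f0 f1 r δF ω} ≤ ENNReal.ofReal δD}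

lemma young_strict {θ a b : ℝ} (hθ0 : 0 < θ) (hθ1 : θ < 1) (ha : 0 < a) (hb : 0 < b)
    (hab : a ≠ b) : a ^ θ * b ^ (1 - θ) < θ * a + (1 - θ) * b := by
  have h1θ : 0 < 1 - θ := by linarith
  have hkey := strictConcaveOn_log_Ioi.2 (Set.mem_Ioi.2 ha) (Set.mem_Ioi.2 hb) hab hθ0 h1θ
    (by ring)
  simp only [smul_eq_mul] at hkey
  have hpos : 0 < θ * a + (1 - θ) * b := by positivity
  have h2 := Real.exp_lt_exp.2 hkey
  rw [Real.exp_add, Real.exp_log hpos] at h2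
  rw [Real.rpow_def_of_pos ha, Real.rpow_def_of_pos hb, mul_comm (Real.log a) θ,
    mul_comm (Real.log b) (1 - θ)]
  exact h2

lemma young_le {θ a b : ℝ} (hθ0 : 0 < θ) (hθ1 : θ < 1) (ha : 0 < a) (hb : 0 < b) :
    a ^ θ * b ^ (1 - θ) ≤ θ * a + (1 - θ) * b := by
  rcases eq_or_ne a b with rfl | hne
  · rw [← Real.rpow_add ha, add_sub_cancel, Real.rpow_one]; ring_nf; exact le_refl _
  · exact (young_strict hθ0 hθ1 ha hb hne).le

/-- Key pointwise identity: `f1 x * exp(-(θ * log (f1 x / f0 x))) = f0 x ^ θ * f1 x ^ (1-θ)`. -/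
lemma key_pointwise {θ a b : ℝ} (ha : 0 < a) (hb : 0 < b) :
    b * Real.exp (-(θ * Real.log (b / a))) = a ^ θ * b ^ (1 - θ) := by
  have hba : 0 < b / a := by positivity
  have hab : 0 < a / b := by positivity
  have h1 : Real.exp (-(θ * Real.log (b / a))) = (a / b) ^ θ := by
    rw [Real.rpow_def_of_pos hab]
    rw [show Real.log (a / b) = -Real.log (b / a) by rw [← Real.log_inv, inv_div]]
    ring_nf
  rw [h1, Real.div_rpow ha.le hb.le, Real.rpow_sub hb, Real.rpow_one]
  field_simp


/-- Facts about the Chernoff coefficient `ρ = ∫ f0^θ f1^(1-θ)`. -/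
lemma rho_facts (f0 f1 : ℝ → ℝ)
    (hf0_pos : ∀ x, 0 < f0 x) (hf1_pos : ∀ x, 0 < f1 x)
    (hf0_meas : Measurable f0) (hf1_meas : Measurable f1)
    (hf0_int : ∫ x, f0 x = 1) (hf1_int : ∫ x, f1 x = 1)
    (hne : volume {x | f0 x ≠ f1 x} ≠ 0)
    {θ : ℝ} (hθ0 : 0 < θ) (hθ1 : θ < 1) :
    Integrable (fun x => f0 x ^ θ * f1 x ^ (1 - θ)) volume ∧
    0 < ∫ x, f0 x ^ θ * f1 x ^ (1 - θ) ∧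
    (∫ x, f0 x ^ θ * f1 x ^ (1 - θ)) < 1 := by
  have hint0 : Integrable f0 volume := by
    by_contra h; rw [integral_undef h] at hf0_int; norm_num at hf0_int
  have hint1 : Integrable f1 volume := by
    by_contra h; rw [integral_undef h] at hf1_int; norm_num at hf1_int
  set φ : ℝ → ℝ := fun x => f0 x ^ θ * f1 x ^ (1 - θ) with hφ
  set ψ : ℝ → ℝ := fun x => θ * f0 x + (1 - θ) * f1 x with hψ
  have hψ_int : Integrable ψ volume := (hint0.const_mul θ).add (hint1.const_mul (1 - θ))
  have hφ_nonneg : ∀ x, 0 ≤ φ x := fun x => by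
    have := hf0_pos x; have := hf1_pos x; positivity
  have hφψ : ∀ x, φ x ≤ ψ x := fun x => young_le hθ0 hθ1 (hf0_pos x) (hf1_pos x)
  have hφ_meas : Measurable φ := (hf0_meas.pow_const θ).mul (hf1_meas.pow_const (1 - θ))
  have hφ_int : Integrable φ volume := by
    refine hψ_int.mono' hφ_meas.aestronglyMeasurable (Filter.Eventually.of_forall fun x => ?_)
    rw [Real.norm_eq_abs, abs_of_nonneg (hφ_nonneg x)]
    exact hφψ x
  refine ⟨hφ_int, ?_, ?_⟩
  · rw [integral_pos_iff_support_of_nonneg hφ_nonneg hφ_int]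
    have hsup : Function.support φ = Set.univ := by
      ext x
      simp only [Function.mem_support, Set.mem_univ, iff_true]
      have := hf0_pos x; have := hf1_pos x
      positivity
    rw [hsup]
    simp [Real.volume_univ]
  · -- strictness
    have hsub_int : Integrable (fun x => ψ x - φ x) volume := hψ_int.sub hφ_int
    have hsub_nonneg : 0 ≤ fun x => ψ x - φ x := fun x => sub_nonneg.2 (hφψ x)
    have hψ_eq : ∫ x, ψ x = 1 := by
      rw [hψ]
      rw [integral_add (hint0.const_mul θ) (hint1.const_mul (1 - θ)),
        MeasureTheory.integral_const_mul, MeasureTheory.integral_const_mul, hf0_int, hf1_int]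
      ring
    have hpos : 0 < ∫ x, (ψ x - φ x) := by
      rw [integral_pos_iff_support_of_nonneg hsub_nonneg hsub_int]
      refine lt_of_lt_of_le ((pos_iff_ne_zero).2 hne)
        (measure_mono (s := {x | f0 x ≠ f1 x}) ?_)
      intro x hx
      simp only [Set.mem_setOf_eq] at hx
      simp only [Function.mem_support]
      have h1 := young_strict hθ0 hθ1 (hf0_pos x) (hf1_pos x) hx
      have h2 : 0 < ψ x - φ x := by simp only [hψ, hφ]; linarith
      exact h2.ne'
    rw [integral_sub hψ_int hφ_int, hψ_eq] at hpos
    linarith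

/-- Expectation of a finite product of independent `ℝ≥0∞`-valued random variables. -/
lemma lintegral_finset_prod_of_iIndepFun {Ω : Type*} [MeasurableSpace Ω] {μ : Measure Ω}
    [IsProbabilityMeasure μ] {F : ℕ → Ω → ℝ≥0∞} (hF : ∀ i, Measurable (F i))
    (hind : iIndepFun F μ) (s : Finset ℕ) :
    ∫⁻ ω, ∏ i ∈ s, F i ω ∂μ = ∏ i ∈ s, ∫⁻ ω, F i ω ∂μ := by
  classical
  induction s using Finset.induction_on with
  | empty => simp
  | @insert a s ha ih =>
    have hindep : IndepFun (∏ j ∈ s, F j) (F a) μ :=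
      hind.indepFun_finsetProd_of_notMem hF ha
    have hmeas : Measurable (∏ j ∈ s, F j) := by
      have : (∏ j ∈ s, F j) = fun ω => ∏ j ∈ s, F j ω := by
        funext ω; simp [Finset.prod_apply]
      rw [this]
      exact Finset.measurable_prod s fun i _ => hF i
    have := lintegral_mul_eq_lintegral_mul_lintegral_of_indepFun hmeas (hF a) hindep
    rw [Finset.prod_insert ha, ← ih]
    have heq : ∫⁻ ω, ∏ i ∈ insert a s, F i ω ∂μ = ∫⁻ ω, F a ω * ∏ i ∈ s, F i ω ∂μ := by
      apply lintegral_congr; intro ω; rw [Finset.prod_insert ha]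
    rw [heq]
    calc ∫⁻ ω, F a ω * ∏ i ∈ s, F i ω ∂μ
        = ∫⁻ ω, ((∏ j ∈ s, F j) * F a) ω ∂μ := by
          apply lintegral_congr; intro ω
          simp [Finset.prod_apply, mul_comm]
      _ = (∫⁻ ω, (∏ j ∈ s, F j) ω ∂μ) * ∫⁻ ω, F a ω ∂μ := this
      _ = (∫⁻ ω, ∏ j ∈ s, F j ω ∂μ) * ∫⁻ ω, F a ω ∂μ := by
          simp [Finset.prod_apply]
      _ = (∫⁻ ω, F a ω ∂μ) * ∫⁻ ω, ∏ j ∈ s, F j ω ∂μ := mul_comm _ _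
/-- Core Chernoff bound for the no-detection event. -/
lemma core_bound (f0 f1 : ℝ → ℝ)
    (hf0_pos : ∀ x, 0 < f0 x) (hf1_pos : ∀ x, 0 < f1 x)
    (hf0_meas : Measurable f0) (hf1_meas : Measurable f1)
    (Pν : ℕ → Measure (ℕ → ℝ)) (hprob : ∀ ν, IsProbabilityMeasure (Pν ν))
    (hiid : ∀ ν, 1 ≤ ν → iIndepFun (fun i (ω : ℕ → ℝ) => ω i) (Pν ν))
    (hmarg : ∀ ν, 1 ≤ ν → ∀ i, (Pν ν).map (fun ω : ℕ → ℝ => ω i)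
      = volume.withDensity (fun x => ENNReal.ofReal (if i < ν then f0 x else f1 x)))
    (δF : ℝ) (hδF0 : 0 < δF)
    (r : ℝ) (hr0 : 0 ≤ r) (hζ : 0 < zeta r)
    {θ' : ℝ} (hθ0 : 0 < θ')
    (hρ_int : Integrable (fun x => f0 x ^ θ' * f1 x ^ (1 - θ')) volume)
    (T ν d : ℕ) (hν : 1 ≤ ν) (hd : 1 ≤ d) (hνdT : ν + d ≤ T) :
    Pν ν {ω | ((ν + d : ℕ) : ℕ∞) ≤ tau f0 f1 r δF ω}
      ≤ (ENNReal.ofReal (∫ x, f0 x ^ θ' * f1 x ^ (1 - θ'))) ^ d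
        / ENNReal.ofReal (Real.exp (-(θ' * beta r δF T))) := by
  classical
  set B := beta r δF T with hB
  set G : ℝ → ℝ≥0∞ := fun x => ENNReal.ofReal (Real.exp (-(θ' * Real.log (f1 x / f0 x)))) with hG
  have hG_meas : Measurable G :=
    ENNReal.measurable_ofReal.comp (Real.measurable_exp.comp
      ((((hf1_meas.div hf0_meas).log).const_mul θ').neg))
  set F : ℕ → (ℕ → ℝ) → ℝ≥0∞ := fun i ω => G (ω i) with hF
  have hF_meas : ∀ i, Measurable (F i) := fun i => hG_meas.comp (measurable_pi_apply i)
  set n := ν + d - 1 with hn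
  have hn1 : 1 ≤ n := by omega
  have hnT : n ≤ T := by omega
  set s := Finset.Icc ν n with hs
  have hcard : s.card = d := by rw [hs, Nat.card_Icc]; omega
  set ε : ℝ≥0∞ := ENNReal.ofReal (Real.exp (-(θ' * B))) with hε
  have hε0 : ε ≠ 0 := by
    simp only [hε, ne_eq, ENNReal.ofReal_eq_zero, not_le]
    exact Real.exp_pos _
  have hεtop : ε ≠ ⊤ := ENNReal.ofReal_ne_top
  have hprobν := hprob ν
  -- Step 1: event inclusion
  have hsub : {ω : ℕ → ℝ | ((ν + d : ℕ) : ℕ∞) ≤ tau f0 f1 r δF ω}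
      ⊆ {ω | ε ≤ ∏ i ∈ s, F i ω} := by
    intro ω hω
    simp only [Set.mem_setOf_eq] at hω ⊢
    -- no crossing at time n
    have hWn : cusum (llr f0 f1 ω) n < beta r δF n := by
      by_contra hcon
      push_neg at hcon
      have h1 : tau f0 f1 r δF ω ≤ (n : ℕ∞) := sInf_le ⟨n, rfl, hn1, hcon⟩
      have h2 : ((ν + d : ℕ) : ℕ∞) ≤ (n : ℕ∞) := le_trans hω h1
      rw [Nat.cast_le] at h2
      omega
    -- the windowed sum is below the cusum
    have hsum : ∑ i ∈ s, llr f0 f1 ω i ≤ cusum (llr f0 f1 ω) n := by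
      have hmem : ν ∈ Finset.Icc 1 n := Finset.mem_Icc.2 ⟨hν, by omega⟩
      haveI : Fintype {k : ℕ // k ∈ Finset.Icc 1 n} := FinsetCoe.fintype _
      exact le_ciSup (f := fun k : {k : ℕ // k ∈ Finset.Icc 1 n} =>
        ∑ i ∈ Finset.Icc (k : ℕ) n, llr f0 f1 ω i)
        (Set.Finite.bddAbove (Set.finite_range _)) ⟨ν, hmem⟩
    -- beta is monotone up to T
    have hbmono : beta r δF n ≤ B := by
      rw [hB]
      unfold _root_.beta
      have hn0 : (0:ℝ) < (n:ℝ) := by exact_mod_cast hn1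
      apply Real.log_le_log (by positivity)
      have hpow : ((n:ℝ)) ^ r ≤ ((T:ℝ)) ^ r :=
        Real.rpow_le_rpow (Nat.cast_nonneg n) (by exact_mod_cast hnT) hr0
      gcongr
    have hSB : ∑ i ∈ s, llr f0 f1 ω i < B := lt_of_le_of_lt hsum (lt_of_lt_of_le hWn hbmono)
    -- conclude
    have hprod : ∏ i ∈ s, F i ω
        = ENNReal.ofReal (Real.exp (-(θ' * ∑ i ∈ s, llr f0 f1 ω i))) := by
      rw [show ∏ i ∈ s, F i ω = ∏ i ∈ s,
          ENNReal.ofReal (Real.exp (-(θ' * llr f0 f1 ω i))) from rfl]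
      rw [← ENNReal.ofReal_prod_of_nonneg (fun i _ => (Real.exp_pos _).le)]
      congr 1
      rw [← Real.exp_sum]
      congr 1
      rw [Finset.mul_sum, ← Finset.sum_neg_distrib]
    rw [hprod, hε]
    apply ENNReal.ofReal_le_ofReal
    apply Real.exp_le_exp.2
    have : θ' * ∑ i ∈ s, llr f0 f1 ω i ≤ θ' * B := by nlinarith [hSB, hθ0]
    linarith
  -- Step 2: Markov
  have hmarkov : Pν ν {ω | ε ≤ ∏ i ∈ s, F i ω}
      ≤ (∫⁻ ω, ∏ i ∈ s, F i ω ∂(Pν ν)) / ε := by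
    apply meas_ge_le_lintegral_div _ hε0 hεtop
    exact (Finset.measurable_prod s fun i _ => hF_meas i).aemeasurable
  -- Step 3: independence product
  have hind : iIndepFun F (Pν ν) := by
    have := (hiid ν hν).comp (fun _ => G) (fun _ => hG_meas)
    exact this
  have hprod_int : ∫⁻ ω, ∏ i ∈ s, F i ω ∂(Pν ν) = ∏ i ∈ s, ∫⁻ ω, F i ω ∂(Pν ν) :=
    lintegral_finset_prod_of_iIndepFun hF_meas hind s
  -- Step 4: marginal value
  have hfactor : ∀ i ∈ s, ∫⁻ ω, F i ω ∂(Pν ν)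
      = ENNReal.ofReal (∫ x, f0 x ^ θ' * f1 x ^ (1 - θ')) := by
    intro i hi
    have hiν : ν ≤ i := (Finset.mem_Icc.1 hi).1
    have h1 : ∫⁻ ω, F i ω ∂(Pν ν) = ∫⁻ x, G x ∂((Pν ν).map (fun ω : ℕ → ℝ => ω i)) :=
      (lintegral_map hG_meas (measurable_pi_apply i)).symm
    rw [h1, hmarg ν hν i]
    have hdens : (fun x => ENNReal.ofReal (if i < ν then f0 x else f1 x))
        = fun x => ENNReal.ofReal (f1 x) := by
      funext x; rw [if_neg (not_lt.2 hiν)]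
    rw [hdens, lintegral_withDensity_eq_lintegral_mul volume
      (f := fun x => ENNReal.ofReal (f1 x))
      (ENNReal.measurable_ofReal.comp hf1_meas) hG_meas]
    have hpt : (fun x => (((fun x => ENNReal.ofReal (f1 x)) * G) x))
        = fun x => ENNReal.ofReal (f0 x ^ θ' * f1 x ^ (1 - θ')) := by
      funext x
      simp only [Pi.mul_apply, hG]
      rw [← ENNReal.ofReal_mul (hf1_pos x).le]
      congr 1
      exact key_pointwise (hf0_pos x) (hf1_pos x)
    rw [hpt]
    rw [← ofReal_integral_eq_lintegral_ofReal hρ_int (Filter.Eventually.of_forall fun x => by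
      have := hf0_pos x; have := hf1_pos x; positivity)]
  calc Pν ν {ω | ((ν + d : ℕ) : ℕ∞) ≤ tau f0 f1 r δF ω}
      ≤ Pν ν {ω | ε ≤ ∏ i ∈ s, F i ω} := measure_mono hsub
    _ ≤ (∫⁻ ω, ∏ i ∈ s, F i ω ∂(Pν ν)) / ε := hmarkov
    _ = (∏ i ∈ s, ∫⁻ ω, F i ω ∂(Pν ν)) / ε := by rw [hprod_int]
    _ = (ENNReal.ofReal (∫ x, f0 x ^ θ' * f1 x ^ (1 - θ'))) ^ d / ε := by
        rw [Finset.prod_congr rfl hfactor, Finset.prod_const, hcard]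

/-- `zeta r ≥ 1` for `r > 1`. -/
lemma one_le_zeta {r : ℝ} (hr : 1 < r) : 1 ≤ zeta r := by
  have hsum : Summable (fun n : ℕ => ((n : ℝ) + 1) ^ (-r)) := by
    have h : Summable (fun n : ℕ => ((n : ℝ)) ^ (-r)) :=
      Real.summable_nat_rpow.2 (by linarith)
    have h2 := (summable_nat_add_iff 1).2 h
    refine h2.congr fun n => ?_
    push_cast
    norm_num
  have h0 : (((0:ℕ) : ℝ) + 1) ^ (-r) ≤ zeta r :=
    Summable.le_tsum hsum 0 (fun j _ => by positivity)
  norm_num at h0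
  exact h0

/-- **Logarithmic growth of the high-probability latency.**  Fix `δF, δD ∈ (0,1)` and
`r > 1`.  Then there are constants `C₁, C₂ ≥ 0` (depending only on `f0, f1, r, δF, δD`)
such that `d_r(T, δF, δD) ≤ C₁ + C₂ log T` for all `T ∈ ℕ`; in particular
`d_r(T, δF, δD) = O(log T)` as `T → ∞`. -/
theorem tvt_cusum_latency_log_growth
    (f0 f1 : ℝ → ℝ)
    (hf0_pos : ∀ x, 0 < f0 x) (hf1_pos : ∀ x, 0 < f1 x)
    (hf0_meas : Measurable f0) (hf1_meas : Measurable f1)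
    (hf0_int : ∫ x, f0 x = 1) (hf1_int : ∫ x, f1 x = 1)
    (hne : volume {x | f0 x ≠ f1 x} ≠ 0)
    (Pν : ℕ → Measure (ℕ → ℝ)) (hprob : ∀ ν, IsProbabilityMeasure (Pν ν))
    (hiid : ∀ ν, 1 ≤ ν → iIndepFun (fun i (ω : ℕ → ℝ) => ω i) (Pν ν))
    (hmarg : ∀ ν, 1 ≤ ν → ∀ i, (Pν ν).map (fun ω : ℕ → ℝ => ω i)
      = volume.withDensity (fun x => ENNReal.ofReal (if i < ν then f0 x else f1 x)))
    (δF δD : ℝ) (hδF : δF ∈ Set.Ioo (0 : ℝ) 1) (hδD : δD ∈ Set.Ioo (0 : ℝ) 1)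
    (r : ℝ) (hr : 1 < r) (θ : ℝ) (hθ : θ ∈ Set.Ioo (0 : ℝ) 1) :
    ∃ C₁ C₂ : ℝ, 0 ≤ C₁ ∧ 0 ≤ C₂ ∧
      ∀ T : ℕ, (hpLatency f0 f1 Pν r T δF δD : ℝ) ≤ C₁ + C₂ * Real.log T := by
  obtain ⟨hθ0, hθ1⟩ := hθ
  obtain ⟨hδF0, hδF1⟩ := hδF
  obtain ⟨hδD0, hδD1⟩ := hδD
  have hr0 : (0:ℝ) ≤ r := by linarith
  have hζ1 : 1 ≤ zeta r := one_le_zeta hr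
  have hζ0 : 0 < zeta r := lt_of_lt_of_le zero_lt_one hζ1
  obtain ⟨hρ_int, hρ_pos, hρ_lt1⟩ :=
    rho_facts f0 f1 hf0_pos hf1_pos hf0_meas hf1_meas hf0_int hf1_int hne hθ0 hθ1
  set ρ : ℝ := ∫ x, f0 x ^ θ * f1 x ^ (1 - θ) with hρ
  set K : ℝ := -Real.log ρ with hK
  have hK0 : 0 < K := by
    rw [hK, neg_pos]
    exact Real.log_neg hρ_pos hρ_lt1
  set C₁ : ℝ := (θ * (Real.log (zeta r) - Real.log δF) + Real.log δD⁻¹) / K + 2 with hC₁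
  set C₂ : ℝ := θ * r / K with hC₂
  have hlogζ : 0 ≤ Real.log (zeta r) := Real.log_nonneg hζ1
  have hlogδF : Real.log δF < 0 := Real.log_neg hδF0 hδF1
  have hlogδD : 0 < Real.log δD⁻¹ := by
    rw [Real.log_inv]
    have := Real.log_neg hδD0 hδD1
    linarith
  have hC₁0 : 0 ≤ C₁ := by
    rw [hC₁]
    have h1 : 0 ≤ θ * (Real.log (zeta r) - Real.log δF) + Real.log δD⁻¹ := by nlinarith
    positivity
  have hC₂0 : 0 ≤ C₂ := by
    rw [hC₂]; positivity
  refine ⟨C₁, C₂, hC₁0, hC₂0, fun T => ?_⟩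
  rcases Nat.eq_zero_or_pos T with rfl | hT1
  · -- T = 0 : every d works vacuously
    have h0mem : (0 : ℕ) ∈ {d : ℕ | ∀ ν : ℕ, 1 ≤ ν → ν + d ≤ 0 →
        Pν ν {ω | ((ν + d : ℕ) : ℕ∞) ≤ tau f0 f1 r δF ω} ≤ ENNReal.ofReal δD} := by
      intro ν hν hν0
      omega
    have : hpLatency f0 f1 Pν r 0 δF δD = 0 := Nat.le_zero.1 (Nat.sInf_le h0mem)
    rw [this]
    simp only [Nat.cast_zero, Nat.cast_ofNat, Real.log_zero, mul_zero, add_zero]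
    linarith
  · -- T ≥ 1
    set B : ℝ := beta r δF T with hB
    have hT0 : (0:ℝ) < (T:ℝ) := by exact_mod_cast hT1
    have hTr1 : (1:ℝ) ≤ (T:ℝ) ^ r := Real.one_le_rpow (by exact_mod_cast hT1) hr0
    have hB_eq : B = Real.log (zeta r) + r * Real.log T - Real.log δF := by
      rw [hB]
      unfold _root_.beta
      rw [Real.log_div (by positivity) (ne_of_gt hδF0),
        Real.log_mul (ne_of_gt hζ0) (by positivity), Real.log_rpow hT0]
    have hB0 : 0 ≤ B := by
      rw [hB]
      unfold _root_.beta
      apply Real.log_nonneg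
      rw [le_div_iff₀ hδF0, one_mul]
      calc δF ≤ 1 := hδF1.le
        _ ≤ zeta r * (T:ℝ) ^ r := by nlinarith
    set L : ℝ := (θ * B + Real.log δD⁻¹) / K with hL
    have hL0 : 0 ≤ L := by
      rw [hL]
      have : 0 ≤ θ * B + Real.log δD⁻¹ := by nlinarith
      positivity
    set d : ℕ := ⌈L⌉₊ + 1 with hd_def
    have hd1 : 1 ≤ d := by omega
    have hdL : L ≤ (d : ℝ) := by
      rw [hd_def]
      push_cast
      have := Nat.le_ceil L
      linarith
    -- membership of d in the latency set
    have hmem : d ∈ {d : ℕ | ∀ ν : ℕ, 1 ≤ ν → ν + d ≤ T →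
        Pν ν {ω | ((ν + d : ℕ) : ℕ∞) ≤ tau f0 f1 r δF ω} ≤ ENNReal.ofReal δD} := by
      intro ν hν hνdT
      refine le_trans (core_bound f0 f1 hf0_pos hf1_pos hf0_meas hf1_meas Pν hprob hiid hmarg
        δF hδF0 r hr0 hζ0 hθ0 hρ_int T ν d hν hd1 hνdT) ?_
      rw [ENNReal.div_le_iff (by
          simp only [ne_eq, ENNReal.ofReal_eq_zero, not_le]; exact Real.exp_pos _)
        ENNReal.ofReal_ne_top]
      rw [← ENNReal.ofReal_pow hρ_pos.le, ← ENNReal.ofReal_mul hδD0.le]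
      apply ENNReal.ofReal_le_ofReal
      -- real inequality: ρ^d ≤ δD * exp(-(θ B))
      have hexp : ρ ^ d = Real.exp ((d:ℝ) * Real.log ρ) := by
        rw [Real.exp_nat_mul, Real.exp_log hρ_pos]
      rw [hexp]
      have hLK : L * K = θ * B + Real.log δD⁻¹ := by
        rw [hL]
        field_simp
      have hdK : θ * B + Real.log δD⁻¹ ≤ (d:ℝ) * K := by
        calc θ * B + Real.log δD⁻¹ = L * K := hLK.symm
          _ ≤ (d:ℝ) * K := by nlinarith
      have hstep : (d:ℝ) * Real.log ρ ≤ Real.log δD + -(θ * B) := by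
        have h1 : (d:ℝ) * Real.log ρ = -((d:ℝ) * K) := by rw [hK]; ring
        have h2 : Real.log δD = -Real.log δD⁻¹ := by rw [Real.log_inv]; ring
        rw [h1, h2]
        linarith
      calc Real.exp ((d:ℝ) * Real.log ρ) ≤ Real.exp (Real.log δD + -(θ * B)) :=
            Real.exp_le_exp.2 hstep
        _ = δD * Real.exp (-(θ * B)) := by rw [Real.exp_add, Real.exp_log hδD0]
    -- conclude
    have hle : hpLatency f0 f1 Pν r T δF δD ≤ d := Nat.sInf_le hmem
    have hcast : (hpLatency f0 f1 Pν r T δF δD : ℝ) ≤ (d : ℝ) := by exact_mod_cast hle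
    have hdle : (d : ℝ) ≤ L + 2 := by
      rw [hd_def]
      push_cast
      have := Nat.ceil_lt_add_one hL0
      linarith
    have hfinal : L + 2 = C₁ + C₂ * Real.log T := by
      rw [hL, hC₁, hC₂, hB_eq]
      field_simp
      ring
    linarith

end
end
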